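/- arXiv:2106.03824 — 9 statements merged into one kernel-verified Lean document; each statement's English description precedes it below -/
import Mathlib

section
/- Let G, δ, λ, K, L, gn, ℓ, k, ĉ be as in the parallel level data structure setting, with ℓ satisfying Invariant 1 and Invariant 2, and assume the group size satisfies L ≥ log_{(2+3/λ)(1+δ)/2}(4m+1). Then for every vertex v with k(v) ≥ 1, the coreness estimate satisfies k(v)/((2+3/λ)(1+δ)) ≤ ĉ(v) ≤ (2+3/λ)(1+δ)·k(v). Consequently, for every ε > 0 one can choose constants δ, λ > 0 (e.g. δ = ε/3 and λ = 9/ε + 3) so that k(v)/(2+ε) ≤ ĉ(v) ≤ (2+ε)·k(v) for every such vertex v. -/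
open Finset

set_option linter.unusedSectionVars false
set_option linter.unusedVariables false
set_option maxHeartbeats 1000000


/-- The number of neighbors `w` of `v` whose level is at least `l` ("up-degree" at level `l`). -/
def upDeg {V : Type} [Fintype V] [DecidableEq V] (G : SimpleGraph V) [DecidableRel G.Adj]
    (ℓ : V → ℕ) (v : V) (l : ℕ) : ℕ :=
  ((G.neighborFinset v).filter (fun w => l ≤ ℓ w)).card

/-- Invariant 1 (degree upper bound): every vertex `v` has at most
`(2 + 3/λ)(1+δ)^{gn(ℓ(v))}` neighbors at level `≥ ℓ(v)`, where `gn(l) = ⌊l / L⌋`. -/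
def Invariant1 {V : Type} [Fintype V] [DecidableEq V] (G : SimpleGraph V) [DecidableRel G.Adj]
    (δ lam : ℝ) (L : ℕ) (ℓ : V → ℕ) : Prop :=
  ∀ v : V, (upDeg G ℓ v (ℓ v) : ℝ) ≤ (2 + 3 / lam) * (1 + δ) ^ (ℓ v / L)

/-- Invariant 2 (degree lower bound): every vertex `v` with `ℓ(v) > 0` has at least
`(1+δ)^{gn(ℓ(v)-1)}` neighbors at level `≥ ℓ(v) - 1`. -/
def Invariant2 {V : Type} [Fintype V] [DecidableEq V] (G : SimpleGraph V) [DecidableRel G.Adj]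
    (δ : ℝ) (L : ℕ) (ℓ : V → ℕ) : Prop :=
  ∀ v : V, 0 < ℓ v → (1 + δ) ^ ((ℓ v - 1) / L) ≤ (upDeg G ℓ v (ℓ v - 1) : ℝ)

/-- The coreness of `v`: the largest `k` such that `v` belongs to an (induced) subgraph of `G`
of minimum degree at least `k`. -/
noncomputable def coreness {V : Type} [Fintype V] [DecidableEq V] (G : SimpleGraph V)
    [DecidableRel G.Adj] (v : V) : ℕ :=
  sSup {k : ℕ | ∃ s : Finset V, v ∈ s ∧ ∀ u ∈ s, k ≤ (s.filter (G.Adj u)).card}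

/-- The coreness estimate `ĉ(v) = (1+δ)^{max(⌊(ℓ(v)+1)/L⌋ - 1, 0)}`
(natural-number division and truncated subtraction). -/
def corenessEstimate {V : Type} (δ : ℝ) (L : ℕ) (ℓ : V → ℕ) (v : V) : ℝ :=
  (1 + δ) ^ ((ℓ v + 1) / L - 1)

section Peel

variable {V : Type} [Fintype V] [DecidableEq V] (G : SimpleGraph V) [DecidableRel G.Adj] (d : ℕ)

noncomputable def peel : Finset V → Finset V := fun s =>
  if h : (s.filter (fun u => (s.filter (G.Adj u)).card < d)).Nonempty
  then peel (s.erase h.choose)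
  else s
termination_by s => s.card
decreasing_by
  exact Finset.card_erase_lt_of_mem (Finset.mem_of_mem_filter _ h.choose_spec)

theorem peel_subset (s : Finset V) : peel G d s ⊆ s := by
  rw [peel]
  split
  · next h => exact (peel_subset _).trans (Finset.erase_subset _ _)
  · exact Finset.Subset.refl _
termination_by s.card
decreasing_by
  rename_i h
  exact Finset.card_erase_lt_of_mem (Finset.mem_of_mem_filter _ (Exists.choose_spec h))

theorem peel_min_deg (s : Finset V) :
    ∀ u ∈ peel G d s, d ≤ ((peel G d s).filter (G.Adj u)).card := by
  rw [peel]
  split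
  · next h => exact peel_min_deg _
  · next h =>
    intro u hu
    by_contra hcon
    exact h ⟨u, Finset.mem_filter.mpr ⟨hu, by omega⟩⟩
termination_by s.card
decreasing_by
  rename_i h
  exact Finset.card_erase_lt_of_mem (Finset.mem_of_mem_filter _ (Exists.choose_spec h))

theorem peel_sum_bound (s : Finset V) : ∀ A B : Finset V, A ⊆ s → Disjoint A (peel G d s) →
    B ⊆ A →
    ∑ u ∈ B, (((peel G d s).filter (G.Adj u)).card + (A.filter (G.Adj u)).card)
      ≤ (d - 1) * (A.card + B.card) := by
  rw [peel]
  split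
  · next h =>
    intro A B hAs hdisj hBA
    have hu₀ := Finset.mem_filter.mp (Exists.choose_spec h)
    set u₀ := Exists.choose h with hu₀def
    set C := peel G d (s.erase u₀) with hC
    have hd1 : 1 ≤ d := by omega
    by_cases hu₀A : u₀ ∈ A
    · -- u₀ ∈ A
      have hCs : C ⊆ s.erase u₀ := peel_subset _ _ _
      have hA's : A.erase u₀ ⊆ s.erase u₀ := Finset.erase_subset_erase _ hAs
      have IH := peel_sum_bound (s.erase u₀) (A.erase u₀) (B.erase u₀) hA's
        (hdisj.mono_left (Finset.erase_subset _ _)) (Finset.erase_subset_erase _ hBA)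
      have h1 : ∀ u, (A.filter (G.Adj u)).card ≤
          ((A.erase u₀).filter (G.Adj u)).card + (if G.Adj u u₀ then 1 else 0) := by
        intro u
        by_cases hadj : G.Adj u u₀
        · simp only [hadj, if_true]
          have hsub : A.filter (G.Adj u) ⊆ insert u₀ ((A.erase u₀).filter (G.Adj u)) := by
            intro w hw
            rcases Finset.mem_filter.mp hw with ⟨hwA, hwadj⟩
            rcases eq_or_ne w u₀ with rfl | hne
            · exact Finset.mem_insert_self _ _
            · exact Finset.mem_insert_of_mem
                (Finset.mem_filter.mpr ⟨Finset.mem_erase.mpr ⟨hne, hwA⟩, hwadj⟩)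
          calc (A.filter (G.Adj u)).card ≤ (insert u₀ ((A.erase u₀).filter (G.Adj u))).card :=
                Finset.card_le_card hsub
            _ ≤ ((A.erase u₀).filter (G.Adj u)).card + 1 := Finset.card_insert_le _ _
        · simp only [hadj, if_false, add_zero]
          refine Finset.card_le_card (fun w hw => ?_)
          rcases Finset.mem_filter.mp hw with ⟨hwA, hwadj⟩
          have hne : w ≠ u₀ := by rintro rfl; exact hadj hwadj
          exact Finset.mem_filter.mpr ⟨Finset.mem_erase.mpr ⟨hne, hwA⟩, hwadj⟩
      have hsum_ite : ∑ u ∈ B.erase u₀, (if G.Adj u u₀ then 1 else 0) ≤ d - 1 := by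
        have he : ∑ u ∈ B.erase u₀, (if G.Adj u u₀ then 1 else 0)
            = ((B.erase u₀).filter (fun u => G.Adj u u₀)).card := (Finset.card_filter _ _).symm
        rw [he]
        have hsub : (B.erase u₀).filter (fun u => G.Adj u u₀) ⊆ s.filter (G.Adj u₀) := by
          intro w hw
          rcases Finset.mem_filter.mp hw with ⟨hwB, hwadj⟩
          exact Finset.mem_filter.mpr ⟨hAs (hBA (Finset.mem_of_mem_erase hwB)), hwadj.symm⟩
        have := Finset.card_le_card hsub
        omega
      have hmain : ∑ u ∈ B.erase u₀, ((C.filter (G.Adj u)).card + (A.filter (G.Adj u)).card)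
          ≤ (d - 1) * ((A.erase u₀).card + (B.erase u₀).card) + (d - 1) := by
        calc ∑ u ∈ B.erase u₀, ((C.filter (G.Adj u)).card + (A.filter (G.Adj u)).card)
            ≤ ∑ u ∈ B.erase u₀, (((C.filter (G.Adj u)).card
                + ((A.erase u₀).filter (G.Adj u)).card) + (if G.Adj u u₀ then 1 else 0)) := by
              refine Finset.sum_le_sum (fun u _ => ?_)
              have := h1 u
              omega
          _ = ∑ u ∈ B.erase u₀, ((C.filter (G.Adj u)).card + ((A.erase u₀).filter (G.Adj u)).card)
                + ∑ u ∈ B.erase u₀, (if G.Adj u u₀ then 1 else 0) := Finset.sum_add_distrib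
          _ ≤ (d - 1) * ((A.erase u₀).card + (B.erase u₀).card) + (d - 1) :=
              Nat.add_le_add IH hsum_ite
      have hAcard : A.card = (A.erase u₀).card + 1 := by
        rw [Finset.card_erase_of_mem hu₀A]
        have : 1 ≤ A.card := Finset.card_pos.mpr ⟨u₀, hu₀A⟩
        omega
      by_cases hu₀B : u₀ ∈ B
      · have hu₀term : (C.filter (G.Adj u₀)).card + (A.filter (G.Adj u₀)).card ≤ d - 1 := by
          have hdisjf : Disjoint (C.filter (G.Adj u₀)) (A.filter (G.Adj u₀)) :=
            (hdisj.symm).mono (Finset.filter_subset _ _) (Finset.filter_subset _ _)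
          have hcard := Finset.card_union_of_disjoint hdisjf
          have hsub : (C.filter (G.Adj u₀)) ∪ (A.filter (G.Adj u₀)) ⊆ s.filter (G.Adj u₀) := by
            refine Finset.union_subset ?_ ?_
            · exact Finset.filter_subset_filter _ (hCs.trans (Finset.erase_subset _ _))
            · exact Finset.filter_subset_filter _ hAs
          have := Finset.card_le_card hsub
          omega
        have hBcard : B.card = (B.erase u₀).card + 1 := by
          rw [Finset.card_erase_of_mem hu₀B]
          have : 1 ≤ B.card := Finset.card_pos.mpr ⟨u₀, hu₀B⟩
          omega
        have hsplit : ∑ u ∈ B, ((C.filter (G.Adj u)).card + (A.filter (G.Adj u)).card)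
            = ((C.filter (G.Adj u₀)).card + (A.filter (G.Adj u₀)).card)
              + ∑ u ∈ B.erase u₀, ((C.filter (G.Adj u)).card + (A.filter (G.Adj u)).card) :=
          (Finset.add_sum_erase _ _ hu₀B).symm
        rw [hsplit, hAcard, hBcard]
        have hr : (d-1) * ((A.erase u₀).card + 1 + ((B.erase u₀).card + 1))
            = (d - 1) * ((A.erase u₀).card + (B.erase u₀).card) + (d-1) + (d-1) := by ring
        rw [hr]
        omega
      · have hBeq : B.erase u₀ = B := Finset.erase_eq_of_notMem hu₀B
        rw [hBeq] at hmain
        rw [hAcard]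
        have hr : (d-1) * ((A.erase u₀).card + 1 + B.card)
            = (d - 1) * ((A.erase u₀).card + B.card) + (d-1) := by ring
        rw [hr]
        omega
    · exact peel_sum_bound (s.erase u₀) A B
        (fun u hu => Finset.mem_erase.mpr ⟨fun e => hu₀A (e ▸ hu), hAs hu⟩) hdisj hBA
  · next hne =>
    intro A B hAs hdisj hBA
    have hA : A = ∅ := by
      have := hdisj.eq_bot_of_le hAs
      simpa using this
    subst hA
    have hB : B = ∅ := Finset.subset_empty.mp hBA
    subst hB
    simp
termination_by s.card
decreasing_by
  all_goals {
    rename_i h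
    exact Finset.card_erase_lt_of_mem (Finset.mem_of_mem_filter _ (Exists.choose_spec h)) }

end Peel

section Coreness

variable {V : Type} [Fintype V] [DecidableEq V] (G : SimpleGraph V) [DecidableRel G.Adj]

theorem corenessBddAbove (v : V) :
    BddAbove {k : ℕ | ∃ s : Finset V, v ∈ s ∧ ∀ u ∈ s, k ≤ (s.filter (G.Adj u)).card} := by
  refine ⟨Fintype.card V, fun k hk => ?_⟩
  obtain ⟨s, hv, hs⟩ := hk
  calc k ≤ (s.filter (G.Adj v)).card := hs v hv
    _ ≤ s.card := Finset.card_le_card (Finset.filter_subset _ _)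
    _ ≤ Fintype.card V := Finset.card_le_univ s

theorem coreness_spec (v : V) :
    ∃ s : Finset V, v ∈ s ∧ ∀ u ∈ s, coreness G v ≤ (s.filter (G.Adj u)).card := by
  have hne : {k : ℕ | ∃ s : Finset V, v ∈ s ∧ ∀ u ∈ s, k ≤ (s.filter (G.Adj u)).card}.Nonempty :=
    ⟨0, {v}, Finset.mem_singleton_self v, fun u _ => Nat.zero_le _⟩
  exact Nat.sSup_mem hne (corenessBddAbove G v)

theorem coreness_ge (v : V) (s : Finset V) (k : ℕ) (hv : v ∈ s)
    (hs : ∀ u ∈ s, k ≤ (s.filter (G.Adj u)).card) : k ≤ coreness G v :=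
  le_csSup (corenessBddAbove G v) ⟨s, hv, hs⟩

end Coreness

theorem main_approx
    {V : Type} [Fintype V] [DecidableEq V] (G : SimpleGraph V) [DecidableRel G.Adj]
    (hm : 1 ≤ G.edgeFinset.card)
    (δ lam : ℝ) (hδ : 0 < δ) (hlam : 0 < lam)
    (L : ℕ)
    (hLdef : L = 4 * ⌈Real.logb (1 + δ) (Fintype.card V)⌉₊)
    (ℓ : V → ℕ)
    (h1 : Invariant1 G δ lam L ℓ) (h2 : Invariant2 G δ L ℓ) :
    ∀ v : V, 1 ≤ coreness G v →
      (coreness G v : ℝ) / ((2 + 3 / lam) * (1 + δ)) ≤ corenessEstimate δ L ℓ v ∧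
      corenessEstimate δ L ℓ v ≤ (2 + 3 / lam) * (1 + δ) * coreness G v := by
  intro v hk1
  set k := coreness G v with hkdef
  have hδ1 : (1:ℝ) < 1 + δ := by linarith
  have hlam3 : (0:ℝ) < 3 / lam := by positivity
  have hc2 : (2:ℝ) < (2 + 3/lam) * (1+δ) := by nlinarith
  have hcpos : (0:ℝ) < (2+3/lam)*(1+δ) := by linarith
  have hc2δ : (2:ℝ) + 2*δ ≤ (2+3/lam)*(1+δ) := by nlinarith
  -- at least two vertices
  have hn2 : 2 ≤ Fintype.card V := by
    obtain ⟨e, he⟩ := Finset.card_pos.mp hm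
    revert he
    refine Sym2.ind (fun a b he => ?_) e
    rw [SimpleGraph.mem_edgeFinset, SimpleGraph.mem_edgeSet] at he
    have : Nontrivial V := ⟨a, b, G.ne_of_adj he⟩
    exact Fintype.one_lt_card
  set M := ⌈Real.logb (1 + δ) (Fintype.card V)⌉₊ with hM
  have hM1 : 1 ≤ M := by
    refine Nat.one_le_iff_ne_zero.mpr (fun h0 => ?_)
    have := Nat.ceil_eq_zero.mp h0
    have hpos : 0 < Real.logb (1 + δ) (Fintype.card V) :=
      Real.logb_pos hδ1 (by exact_mod_cast Nat.lt_of_lt_of_le one_lt_two hn2)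
    linarith
  have hL0 : 0 < L := by omega
  have hnM : ((Fintype.card V : ℝ)) ≤ (1+δ)^M := by
    have h0 : (0:ℝ) < Fintype.card V := by
      have : (0:ℕ) < Fintype.card V := by omega
      exact_mod_cast this
    have hlogb : Real.logb (1+δ) (Fintype.card V) ≤ (M : ℝ) := Nat.le_ceil _
    calc ((Fintype.card V : ℝ))
        = (1+δ) ^ (Real.logb (1+δ) (Fintype.card V)) :=
          (Real.rpow_logb (by linarith) (by linarith) h0).symm
      _ ≤ (1+δ) ^ (M:ℝ) := Real.rpow_le_rpow_of_exponent_le hδ1.le hlogb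
      _ = (1+δ)^M := Real.rpow_natCast _ _
  constructor
  · -- lower bound via Invariant 1
    obtain ⟨H, hvH, hH⟩ := coreness_spec G v
    obtain ⟨u, huH, humin⟩ := Finset.exists_min_image H ℓ ⟨v, hvH⟩
    have hk_up : k ≤ upDeg G ℓ u (ℓ u) := by
      refine le_trans (hH u huH) (Finset.card_le_card ?_)
      intro w hw
      rcases Finset.mem_filter.mp hw with ⟨hwH, hadj⟩
      exact Finset.mem_filter.mpr ⟨(G.mem_neighborFinset u w).mpr hadj, humin w hwH⟩
    have hk_le : (k:ℝ) ≤ (2+3/lam) * (1+δ)^(ℓ u / L) :=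
      le_trans (by exact_mod_cast hk_up) (h1 u)
    have hexp : ℓ u / L ≤ (ℓ v + 1)/L :=
      le_trans (Nat.div_le_div_right (humin v hvH)) (Nat.div_le_div_right (Nat.le_succ _))
    have key : (1+δ)^(ℓ u / L) ≤ (1+δ) * (1+δ)^((ℓ v + 1)/L - 1) := by
      calc ((1+δ):ℝ)^(ℓ u / L) ≤ (1+δ)^((ℓ v + 1)/L - 1 + 1) :=
            pow_le_pow_right₀ hδ1.le (by omega)
        _ = (1+δ)^((ℓ v + 1)/L - 1) * (1+δ) := pow_succ _ _
        _ = (1+δ) * (1+δ)^((ℓ v + 1)/L - 1) := mul_comm _ _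
    have hfinal : (k:ℝ) ≤ (2+3/lam) * ((1+δ) * (1+δ)^((ℓ v + 1)/L - 1)) :=
      le_trans hk_le (mul_le_mul_of_nonneg_left key (by positivity))
    rw [div_le_iff₀ hcpos]
    unfold corenessEstimate
    nlinarith [hfinal]
  · -- upper bound via Invariant 2 and peeling
    by_contra hcon
    push_neg at hcon
    unfold corenessEstimate at hcon
    set e := (ℓ v + 1)/L - 1 with hedef
    have hk1' : (1:ℝ) ≤ (k:ℝ) := by exact_mod_cast hk1
    have hcon' : ((2+3/lam)*(1+δ)) * k < (1+δ)^e := by nlinarith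
    have hD2 : (2:ℝ) < (1+δ)^e := by nlinarith
    have he1 : 1 ≤ e := by
      by_contra h0
      have : e = 0 := by omega
      rw [this] at hD2
      norm_num at hD2
    have hq2 : 2 ≤ (ℓ v + 1)/L := by omega
    have hlvbig : e*L + (L-1) ≤ ℓ v := by
      have h1' : (e+1) * L ≤ ℓ v + 1 := by
        have heq : e + 1 = (ℓ v + 1)/L := by omega
        rw [heq]
        exact Nat.div_mul_le_self _ _
      rw [add_mul, one_mul] at h1'
      have h4L : 4 ≤ L := by omega
      generalize hP : e*L = P at h1' ⊢
      omega
    set d := k + 1 with hddef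
    set C := peel G d Finset.univ with hCdef
    have hvC : v ∉ C := by
      intro hvC
      have := coreness_ge G v C d hvC (peel_min_deg G d Finset.univ)
      omega
    set A : ℕ → Finset V := fun l => (Finset.univ.filter (fun u => l ≤ ℓ u)) \ C with hAdef
    have hstep : ∀ l, e*L + 1 ≤ l → l ≤ ℓ v →
        (1+δ) * ((A l).card : ℝ) ≤ ((A (l-1)).card : ℝ) := by
      intro l hl1 hl2
      have hsumu : ∀ u ∈ A l, ((1+δ):ℝ)^e ≤
          (((C.filter (G.Adj u)).card + ((A (l-1)).filter (G.Adj u)).card : ℕ) : ℝ) := by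
        intro u hu
        rcases Finset.mem_sdiff.mp hu with ⟨hu1, hu2⟩
        have hul : l ≤ ℓ u := (Finset.mem_filter.mp hu1).2
        have hlu0 : 0 < ℓ u := by omega
        have hinv2 := h2 u hlu0
        have hexp2 : e ≤ (ℓ u - 1) / L := by
          refine (Nat.le_div_iff_mul_le hL0).mpr ?_
          omega
        have hsplit : upDeg G ℓ u (ℓ u - 1) ≤
            (C.filter (G.Adj u)).card + ((A (l-1)).filter (G.Adj u)).card := by
          have hsub : (G.neighborFinset u).filter (fun w => ℓ u - 1 ≤ ℓ w)
              ⊆ (C.filter (G.Adj u)) ∪ ((A (l-1)).filter (G.Adj u)) := by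
            intro w hw
            rcases Finset.mem_filter.mp hw with ⟨hwn, hwl⟩
            have hadj : G.Adj u w := (G.mem_neighborFinset u w).mp hwn
            by_cases hwC : w ∈ C
            · exact Finset.mem_union_left _ (Finset.mem_filter.mpr ⟨hwC, hadj⟩)
            · refine Finset.mem_union_right _ (Finset.mem_filter.mpr ⟨?_, hadj⟩)
              refine Finset.mem_sdiff.mpr
                ⟨Finset.mem_filter.mpr ⟨Finset.mem_univ _, by omega⟩, hwC⟩
          calc upDeg G ℓ u (ℓ u - 1)
              ≤ ((C.filter (G.Adj u)) ∪ ((A (l-1)).filter (G.Adj u))).card :=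
                Finset.card_le_card hsub
            _ ≤ _ := Finset.card_union_le _ _
        calc ((1+δ):ℝ)^e ≤ (1+δ)^((ℓ u - 1)/L) := pow_le_pow_right₀ hδ1.le hexp2
          _ ≤ (upDeg G ℓ u (ℓ u - 1) : ℝ) := hinv2
          _ ≤ _ := by exact_mod_cast hsplit
      have hAlsub : A l ⊆ A (l-1) := by
        intro u hu
        rcases Finset.mem_sdiff.mp hu with ⟨hu1, hu2⟩
        have := (Finset.mem_filter.mp hu1).2
        exact Finset.mem_sdiff.mpr
          ⟨Finset.mem_filter.mpr ⟨Finset.mem_univ _, by omega⟩, hu2⟩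
      have hpeel := peel_sum_bound G d Finset.univ (A (l-1)) (A l)
        (Finset.subset_univ _) (Finset.sdiff_disjoint) hAlsub
      have hsum2 : ((1+δ):ℝ)^e * ((A l).card : ℝ)
          ≤ (k : ℝ) * (((A (l-1)).card : ℝ) + ((A l).card : ℝ)) := by
        have hstep1 : ((1+δ):ℝ)^e * ((A l).card : ℝ)
            ≤ ((∑ u ∈ A l, ((C.filter (G.Adj u)).card + ((A (l-1)).filter (G.Adj u)).card) : ℕ) : ℝ) := by
          rw [Nat.cast_sum]
          calc ((1+δ):ℝ)^e * ((A l).card : ℝ) = ∑ _u ∈ A l, ((1+δ):ℝ)^e := by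
                rw [Finset.sum_const, nsmul_eq_mul]; ring
            _ ≤ _ := Finset.sum_le_sum hsumu
        have hstep2 : ((∑ u ∈ A l, ((C.filter (G.Adj u)).card
            + ((A (l-1)).filter (G.Adj u)).card) : ℕ) : ℝ)
            ≤ (k : ℝ) * (((A (l-1)).card : ℝ) + ((A l).card : ℝ)) := by
          have hd1k : d - 1 = k := by omega
          rw [hd1k] at hpeel
          exact_mod_cast hpeel
        linarith
      -- conclude the step
      have hX : (0:ℝ) ≤ ((A l).card : ℝ) := Nat.cast_nonneg _
      have hkpos : (0:ℝ) < (k:ℝ) := by linarith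
      have hckX : ((2+3/lam)*(1+δ)) * (k:ℝ) * ((A l).card : ℝ) ≤ (1+δ)^e * ((A l).card : ℝ) :=
        mul_le_mul_of_nonneg_right hcon'.le hX
      have hkey : (k:ℝ) * ((1+δ) * ((A l).card : ℝ)) ≤ (k:ℝ) * ((A (l-1)).card : ℝ) := by
        have hA1 : (2+2*δ) * ((k:ℝ) * ((A l).card : ℝ))
            ≤ ((2+3/lam)*(1+δ)) * ((k:ℝ) * ((A l).card : ℝ)) :=
          mul_le_mul_of_nonneg_right hc2δ (mul_nonneg hkpos.le hX)
        nlinarith [hA1, hckX, hsum2, mul_nonneg (mul_nonneg hδ.le hkpos.le) hX]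
      exact le_of_mul_le_mul_left hkey hkpos
    -- the chain
    have hchain : ∀ j, j ≤ L - 1 → ((1+δ):ℝ)^j ≤ ((A (e*L + (L-1) - j)).card : ℝ) := by
      intro j
      induction j with
      | zero =>
        intro _
        have hvA : v ∈ A (e*L + (L-1)) := by
          refine Finset.mem_sdiff.mpr ⟨Finset.mem_filter.mpr ⟨Finset.mem_univ _, ?_⟩, hvC⟩
          omega
        have : 1 ≤ (A (e*L + (L-1))).card := Finset.card_pos.mpr ⟨v, hvA⟩
        simpa using (by exact_mod_cast this : (1:ℝ) ≤ ((A (e*L + (L-1))).card : ℝ))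
      | succ j ih =>
        intro hj
        have ihj := ih (by omega)
        have hstepj := hstep (e*L + (L-1) - j) (by omega) (by omega)
        have heq : e*L + (L-1) - j - 1 = e*L + (L-1) - (j+1) := by omega
        calc ((1+δ):ℝ)^(j+1) = (1+δ) * (1+δ)^j := by ring
          _ ≤ (1+δ) * ((A (e*L + (L-1) - j)).card : ℝ) :=
              mul_le_mul_of_nonneg_left ihj (by linarith)
          _ ≤ ((A (e*L + (L-1) - j - 1)).card : ℝ) := hstepj
          _ = _ := by rw [heq]
    have hfin := hchain (L-1) le_rfl
    have heL : e*L + (L-1) - (L-1) = e*L := by omega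
    rw [heL] at hfin
    have hcard_n : ((A (e*L)).card : ℝ) ≤ (Fintype.card V : ℝ) := by
      exact_mod_cast Finset.card_le_univ _
    have hpow3 : (((Fintype.card V : ℝ))^3) ≤ ((1+δ):ℝ)^(L-1) := by
      calc ((Fintype.card V : ℝ))^3 ≤ ((1+δ)^M)^3 :=
            pow_le_pow_left₀ (by positivity) hnM 3
        _ = (1+δ)^(3*M) := by rw [← pow_mul, mul_comm]
        _ ≤ (1+δ)^(L-1) := pow_le_pow_right₀ hδ1.le (by omega)
    have hncast : (2:ℝ) ≤ (Fintype.card V : ℝ) := by exact_mod_cast hn2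
    have h4 : (4:ℝ) ≤ (Fintype.card V : ℝ)^2 := by nlinarith
    have h5 : (Fintype.card V : ℝ) * 4 ≤ (Fintype.card V : ℝ) * (Fintype.card V : ℝ)^2 :=
      mul_le_mul_of_nonneg_left h4 (by linarith)
    have h6 : (Fintype.card V : ℝ) * (Fintype.card V : ℝ)^2 = (Fintype.card V : ℝ)^3 := by ring
    linarith

theorem plds_coreness_two_plus_eps_approximation'
    {V : Type} [Fintype V] [DecidableEq V] (G : SimpleGraph V) [DecidableRel G.Adj]
    (hm : 1 ≤ G.edgeFinset.card)
    (δ lam : ℝ) (hδ : 0 < δ) (hlam : 0 < lam)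
    (K L : ℕ) (hK : 1 ≤ K)
    (hLdef : L = 4 * ⌈Real.logb (1 + δ) (Fintype.card V)⌉₊)
    (hLbig : Real.logb ((2 + 3 / lam) * (1 + δ) / 2) (4 * G.edgeFinset.card + 1) ≤ (L : ℝ))
    (ℓ : V → ℕ) (hℓ : ∀ v, ℓ v < K)
    (h1 : Invariant1 G δ lam L ℓ) (h2 : Invariant2 G δ L ℓ) :
    (∀ v : V, 1 ≤ coreness G v →
        (coreness G v : ℝ) / ((2 + 3 / lam) * (1 + δ)) ≤ corenessEstimate δ L ℓ v ∧
        corenessEstimate δ L ℓ v ≤ (2 + 3 / lam) * (1 + δ) * coreness G v) ∧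
    (∀ ε : ℝ, 0 < ε → ∃ δ' lam' : ℝ, 0 < δ' ∧ 0 < lam' ∧
      ∀ (K' L' : ℕ), 1 ≤ K' →
        L' = 4 * ⌈Real.logb (1 + δ') (Fintype.card V)⌉₊ →
        Real.logb ((2 + 3 / lam') * (1 + δ') / 2) (4 * G.edgeFinset.card + 1) ≤ (L' : ℝ) →
        ∀ ℓ' : V → ℕ, (∀ v, ℓ' v < K') →
          Invariant1 G δ' lam' L' ℓ' → Invariant2 G δ' L' ℓ' →
          ∀ v : V, 1 ≤ coreness G v →
            (coreness G v : ℝ) / (2 + ε) ≤ corenessEstimate δ' L' ℓ' v ∧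
            corenessEstimate δ' L' ℓ' v ≤ (2 + ε) * coreness G v) := by
  constructor
  · exact main_approx G hm δ lam hδ hlam L hLdef ℓ h1 h2
  · intro ε hε
    refine ⟨ε/3, 9/ε + 3, by linarith, by positivity, ?_⟩
    intro K' L' hK' hLdef' hLbig' ℓ' hℓ' h1' h2' v hv
    have hconst : (2 + 3 / (9/ε + 3)) * (1 + ε/3) = 2 + ε := by
      have hne : 9/ε + 3 ≠ 0 := by positivity
      have hεne : ε ≠ 0 := ne_of_gt hε
      field_simp
      ring
    have := main_approx G hm (ε/3) (9/ε + 3) (by linarith) (by positivity) L' hLdef' ℓ' h1' h2' v hv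
    rw [hconst] at this
    exact this


/-- In the parallel level data structure setting, if `ℓ` satisfies
Invariants 1 and 2 and the group size satisfies
`L ≥ log_{(2+3/λ)(1+δ)/2}(4m+1)`, then for every vertex `v` with `k(v) ≥ 1`,
`k(v)/((2+3/λ)(1+δ)) ≤ ĉ(v) ≤ (2+3/λ)(1+δ)·k(v)`.  Consequently, for every `ε > 0` one can
choose constants `δ, λ > 0` so that `k(v)/(2+ε) ≤ ĉ(v) ≤ (2+ε)·k(v)` for all such `v`. -/
theorem plds_coreness_two_plus_eps_approximation
    {V : Type} [Fintype V] [DecidableEq V] (G : SimpleGraph V) [DecidableRel G.Adj]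
    (hm : 1 ≤ G.edgeFinset.card)
    (δ lam : ℝ) (hδ : 0 < δ) (hlam : 0 < lam)
    (K L : ℕ) (hK : 1 ≤ K)
    (hLdef : L = 4 * ⌈Real.logb (1 + δ) (Fintype.card V)⌉₊)
    (hLbig : Real.logb ((2 + 3 / lam) * (1 + δ) / 2) (4 * G.edgeFinset.card + 1) ≤ (L : ℝ))
    (ℓ : V → ℕ) (hℓ : ∀ v, ℓ v < K)
    (h1 : Invariant1 G δ lam L ℓ) (h2 : Invariant2 G δ L ℓ) :
    (∀ v : V, 1 ≤ coreness G v →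
        (coreness G v : ℝ) / ((2 + 3 / lam) * (1 + δ)) ≤ corenessEstimate δ L ℓ v ∧
        corenessEstimate δ L ℓ v ≤ (2 + 3 / lam) * (1 + δ) * coreness G v) ∧
    (∀ ε : ℝ, 0 < ε → ∃ δ' lam' : ℝ, 0 < δ' ∧ 0 < lam' ∧
      ∀ (K' L' : ℕ), 1 ≤ K' →
        L' = 4 * ⌈Real.logb (1 + δ') (Fintype.card V)⌉₊ →
        Real.logb ((2 + 3 / lam') * (1 + δ') / 2) (4 * G.edgeFinset.card + 1) ≤ (L' : ℝ) →
        ∀ ℓ' : V → ℕ, (∀ v, ℓ' v < K') →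
          Invariant1 G δ' lam' L' ℓ' → Invariant2 G δ' L' ℓ' →
          ∀ v : V, 1 ≤ coreness G v →
            (coreness G v : ℝ) / (2 + ε) ≤ corenessEstimate δ' L' ℓ' v ∧
            corenessEstimate δ' L' ℓ' v ≤ (2 + ε) * coreness G v) := by
  exact plds_coreness_two_plus_eps_approximation' G hm δ lam hδ hlam K L hK hLdef hLbig ℓ hℓ h1 h2
end

section
/- Let G, δ, λ, K, L, gn, ℓ, k, ĉ be as in the parallel level data structure setting, with ℓ satisfying Invariant 1 (Invariant 2 may also be assumed but is not needed). Then for every vertex v and every integer g' ≥ 0: if k(v) > (2+3/λ)(1+δ)^{g'}, then ĉ(v) ≥ (1+δ)^{g'}; equivalently, ℓ(v) is strictly above the topmost level of group g'. -/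
/-- In the parallel level data structure setting, if `ℓ` satisfies Invariant 1,
then for every vertex `v` and integer `g' ≥ 0`: if `k(v) > (2+3/λ)(1+δ)^{g'}` then
`ĉ(v) ≥ (1+δ)^{g'}`; equivalently, `ℓ(v)` is strictly above the topmost level
`(g'+1)·L - 1` of group `g'`. -/
theorem plds_coreness_lower_level_bound
    {V : Type} [Fintype V] [DecidableEq V] (G : SimpleGraph V) [DecidableRel G.Adj]
    (hm : 1 ≤ G.edgeFinset.card)
    (δ lam : ℝ) (hδ : 0 < δ) (hlam : 0 < lam)
    (K L : ℕ) (hK : 1 ≤ K)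
    (hLdef : L = 4 * ⌈Real.logb (1 + δ) (Fintype.card V)⌉₊)
    (ℓ : V → ℕ) (hℓ : ∀ v, ℓ v < K)
    (h1 : Invariant1 G δ lam L ℓ) :
    ∀ (v : V) (g' : ℕ), (2 + 3 / lam) * (1 + δ) ^ g' < (coreness G v : ℝ) →
      (1 + δ) ^ g' ≤ corenessEstimate δ L ℓ v ∧ (g' + 1) * L - 1 < ℓ v := by
  intro v g' hk
  -- L is positive
  have hn2 : 1 < Fintype.card V := by
    obtain ⟨e, he⟩ := Finset.card_pos.mp hm
    rw [SimpleGraph.mem_edgeFinset] at he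
    induction e with
    | h a b =>
      exact Fintype.one_lt_card_iff.mpr ⟨a, b, G.ne_of_adj ((SimpleGraph.mem_edgeSet G).mp he)⟩
  have hL : 0 < L := by
    rw [hLdef]
    exact Nat.mul_pos (by norm_num)
      (Nat.ceil_pos.mpr (Real.logb_pos (by linarith) (by exact_mod_cast hn2)))
  -- coreness is attained
  have hne : {k : ℕ | ∃ s : Finset V, v ∈ s ∧ ∀ u ∈ s, k ≤ (s.filter (G.Adj u)).card}.Nonempty :=
    ⟨0, {v}, Finset.mem_singleton_self v, fun u _ => Nat.zero_le _⟩
  have hbdd : BddAbove {k : ℕ | ∃ s : Finset V, v ∈ s ∧ ∀ u ∈ s, k ≤ (s.filter (G.Adj u)).card} := by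
    refine ⟨Fintype.card V, fun k hk => ?_⟩
    obtain ⟨s, hv, hs⟩ := hk
    exact le_trans (hs v hv) (le_trans (Finset.card_le_card (Finset.filter_subset _ _))
      (le_trans (Finset.card_le_univ s) (le_of_eq Finset.card_univ)))
  have hmem : coreness G v ∈
      {k : ℕ | ∃ s : Finset V, v ∈ s ∧ ∀ u ∈ s, k ≤ (s.filter (G.Adj u)).card} :=
    Nat.sSup_mem hne hbdd
  obtain ⟨s, hv, hs⟩ := hmem
  obtain ⟨u, hu, hmin⟩ := s.exists_min_image ℓ ⟨v, hv⟩
  have hsub : s.filter (G.Adj u) ⊆ (G.neighborFinset u).filter (fun w => ℓ u ≤ ℓ w) := by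
    intro w hw
    simp only [Finset.mem_filter, SimpleGraph.mem_neighborFinset] at hw ⊢
    exact ⟨hw.2, hmin w hw.1⟩
  have hcore : coreness G v ≤ upDeg G ℓ u (ℓ u) :=
    le_trans (hs u hu) (Finset.card_le_card hsub)
  have hpos : (0:ℝ) < 2 + 3 / lam := by positivity
  have hchain : (2 + 3 / lam) * (1 + δ) ^ g' < (2 + 3 / lam) * (1 + δ) ^ (ℓ u / L) := by
    calc (2 + 3 / lam) * (1 + δ) ^ g' < (coreness G v : ℝ) := hk
    _ ≤ (upDeg G ℓ u (ℓ u) : ℝ) := by exact_mod_cast hcore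
    _ ≤ (2 + 3 / lam) * (1 + δ) ^ (ℓ u / L) := h1 u
  have hexp : g' < ℓ u / L := by
    have := (mul_lt_mul_iff_right₀ hpos).mp hchain
    exact (pow_lt_pow_iff_right₀ (by linarith : (1:ℝ) < 1 + δ)).mp this
  have hlu : (g' + 1) * L ≤ ℓ u := (Nat.le_div_iff_mul_le hL).mp hexp
  have hlv : (g' + 1) * L ≤ ℓ v := le_trans hlu (hmin v hv)
  constructor
  · have hq : g' + 1 ≤ (ℓ v + 1) / L := (Nat.le_div_iff_mul_le hL).mpr (by omega)
    have hge : g' ≤ (ℓ v + 1) / L - 1 := by omega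
    unfold corenessEstimate
    exact pow_le_pow_right₀ (by linarith) hge
  · have : 0 < (g' + 1) * L := Nat.mul_pos (Nat.succ_pos _) hL
    omega
end

section
/- For every ε > 0 there exist constants δ > 0 and λ > 0 (depending only on ε) with the following property. Let G, K, L, gn, ℓ be as in the parallel level data structure setting with these δ, λ, with ℓ satisfying Invariant 1 and Invariant 2, and assume L ≥ log_{(2+3/λ)(1+δ)/2}(4m+1). Then every vertex v has at most (4+ε)·d neighbors w with ℓ(w) ≥ ℓ(v), where d is the degeneracy of G. Consequently, orienting every edge of G toward its endpoint of strictly higher level (breaking ties among endpoints on the same level by a fixed linear order on the vertices) yields an acyclic orientation of G whose maximum out-degree is at most (4+ε)·d, i.e. at most (4+ε) times the minimum possible maximum out-degree of an acyclic orientation of G. -/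
/-- The degeneracy of `G`: the maximum coreness of a vertex. -/
noncomputable def degeneracy {V : Type} [Fintype V] [DecidableEq V] (G : SimpleGraph V)
    [DecidableRel G.Adj] : ℕ :=
  Finset.univ.sup (coreness G)

/-- The orientation induced by the levels: each edge is oriented toward its endpoint of
strictly higher level, ties on the same level broken by the linear order on vertices. -/
def levelOrient {V : Type} [LinearOrder V] (G : SimpleGraph V) (ℓ : V → ℕ) (u v : V) : Prop :=
  G.Adj u v ∧ (ℓ u < ℓ v ∨ (ℓ u = ℓ v ∧ u < v))

instance {V : Type} [LinearOrder V] (G : SimpleGraph V) [DecidableRel G.Adj] (ℓ : V → ℕ) :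
    DecidableRel (levelOrient G ℓ) := fun u v =>
  inferInstanceAs (Decidable (G.Adj u v ∧ (ℓ u < ℓ v ∨ (ℓ u = ℓ v ∧ u < v))))


open Finset in

lemma peel_s3 {V : Type} [DecidableEq V] (G : SimpleGraph V) [DecidableRel G.Adj] (k : ℕ) :
    ∀ (S : Finset V), 2 * k * S.card < ∑ u ∈ S, ((S.filter (G.Adj u)).card) →
    ∃ T : Finset V, T.Nonempty ∧ ∀ u ∈ T, k + 1 ≤ (T.filter (G.Adj u)).card := by
  intro S
  induction S using Finset.strongInduction with
  | _ S ih =>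
    intro hS
    by_cases hall : ∀ u ∈ S, k + 1 ≤ (S.filter (G.Adj u)).card
    · refine ⟨S, ?_, hall⟩
      rcases S.eq_empty_or_nonempty with rfl | hne
      · simp at hS
      · exact hne
    · push_neg at hall
      obtain ⟨u₀, hu₀S, hu₀deg⟩ := hall
      have hdeg : (S.filter (G.Adj u₀)).card ≤ k := by omega
      set S' := S.erase u₀ with hS'
      have hsub : S' ⊂ S := Finset.erase_ssubset hu₀S
      have hcard : S.card = S'.card + 1 := by
        rw [hS', Finset.card_erase_of_mem hu₀S]
        have : 0 < S.card := Finset.card_pos.mpr ⟨u₀, hu₀S⟩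
        omega
      -- key : sum over S ≤ sum over S' of S'-degrees + 2 * deg u₀
      have hsplit : ∑ u ∈ S, (S.filter (G.Adj u)).card
          = (S.filter (G.Adj u₀)).card + ∑ u ∈ S', (S.filter (G.Adj u)).card := by
        exact (Finset.add_sum_erase _ (fun u => (S.filter (G.Adj u)).card) hu₀S).symm
      have hterm : ∀ u ∈ S', (S.filter (G.Adj u)).card
          ≤ (S'.filter (G.Adj u)).card + (if G.Adj u₀ u then 1 else 0) := by
        intro u huS'
        by_cases hadj : G.Adj u₀ u
        · simp only [hadj, if_true]
          have : S.filter (G.Adj u) ⊆ insert u₀ (S'.filter (G.Adj u)) := by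
            intro w hw
            simp only [Finset.mem_filter] at hw
            by_cases hwu : w = u₀
            · simp [hwu]
            · exact Finset.mem_insert_of_mem (by
                simp only [Finset.mem_filter, hS', Finset.mem_erase]
                exact ⟨⟨hwu, hw.1⟩, hw.2⟩)
          calc (S.filter (G.Adj u)).card ≤ (insert u₀ (S'.filter (G.Adj u))).card :=
                Finset.card_le_card this
            _ ≤ (S'.filter (G.Adj u)).card + 1 := Finset.card_insert_le _ _
        · simp only [hadj, if_false, add_zero]
          apply Finset.card_le_card
          intro w hw
          simp only [Finset.mem_filter] at hw ⊢
          have hwu : w ≠ u₀ := by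
            rintro rfl; exact hadj hw.2.symm
          exact ⟨Finset.mem_erase.mpr ⟨hwu, hw.1⟩, hw.2⟩
      have hsum2 : ∑ u ∈ S', (S.filter (G.Adj u)).card
          ≤ (∑ u ∈ S', (S'.filter (G.Adj u)).card) + (S'.filter (G.Adj u₀)).card := by
        calc ∑ u ∈ S', (S.filter (G.Adj u)).card
            ≤ ∑ u ∈ S', ((S'.filter (G.Adj u)).card + (if G.Adj u₀ u then 1 else 0)) :=
              Finset.sum_le_sum hterm
          _ = (∑ u ∈ S', (S'.filter (G.Adj u)).card) + ∑ u ∈ S', (if G.Adj u₀ u then 1 else 0) := by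
              rw [Finset.sum_add_distrib]
          _ = (∑ u ∈ S', (S'.filter (G.Adj u)).card) + (S'.filter (G.Adj u₀)).card := by
              simp [Finset.sum_boole]
      have hles : (S'.filter (G.Adj u₀)).card ≤ k := by
        refine le_trans (Finset.card_le_card ?_) hdeg
        exact Finset.filter_subset_filter _ (Finset.erase_subset _ _)
      have hnew : 2 * k * S'.card < ∑ u ∈ S', (S'.filter (G.Adj u)).card := by
        have : 2 * k * S.card < (∑ u ∈ S', (S'.filter (G.Adj u)).card) + 2 * k := by
          calc 2 * k * S.card < ∑ u ∈ S, (S.filter (G.Adj u)).card := hS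
            _ = (S.filter (G.Adj u₀)).card + ∑ u ∈ S', (S.filter (G.Adj u)).card := hsplit
            _ ≤ (S.filter (G.Adj u₀)).card + ((∑ u ∈ S', (S'.filter (G.Adj u)).card)
                  + (S'.filter (G.Adj u₀)).card) := by omega
            _ ≤ (∑ u ∈ S', (S'.filter (G.Adj u)).card) + 2 * k := by omega
        have h2 : 2 * k * S.card = 2 * k * S'.card + 2 * k := by rw [hcard]; ring
        omega
      exact ih S' hsub hnew


lemma coreness_bdd {V : Type} [Fintype V] [DecidableEq V] (G : SimpleGraph V)
    [DecidableRel G.Adj] (v : V) :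
    BddAbove {k : ℕ | ∃ s : Finset V, v ∈ s ∧ ∀ u ∈ s, k ≤ (s.filter (G.Adj u)).card} := by
  refine ⟨Fintype.card V, ?_⟩
  rintro k ⟨s, hv, h⟩
  calc k ≤ (s.filter (G.Adj v)).card := h v hv
    _ ≤ s.card := Finset.card_le_card (Finset.filter_subset _ _)
    _ ≤ Fintype.card V := Finset.card_le_univ s

lemma le_degeneracy {V : Type} [Fintype V] [DecidableEq V] (G : SimpleGraph V)
    [DecidableRel G.Adj] (k : ℕ) (T : Finset V) (hT : T.Nonempty)
    (h : ∀ u ∈ T, k ≤ (T.filter (G.Adj u)).card) :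
    k ≤ degeneracy G := by
  obtain ⟨u, hu⟩ := hT
  have h1 : k ≤ coreness G u := le_csSup (coreness_bdd G u) ⟨T, hu, fun w hw => h w hw⟩
  exact le_trans h1 (Finset.le_sup (Finset.mem_univ u))

lemma exists_o_minimal {V : Type} [Fintype V] (o : V → V → Prop)
    (hacyc : ∀ v, ¬ Relation.TransGen o v v) (s : Finset V) (hs : s.Nonempty) :
    ∃ u ∈ s, ∀ w ∈ s, ¬ Relation.TransGen o w u := by
  haveI : IsIrrefl V (Relation.TransGen o) := ⟨hacyc⟩
  have wf : WellFounded (Relation.TransGen o) :=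
    Finite.wellFounded_of_trans_of_irrefl _
  obtain ⟨u, hus, hmin⟩ := wf.has_min ↑s (by exact ⟨hs.choose, hs.choose_spec⟩)
  exact ⟨u, hus, fun w hw ht => hmin w hw ht⟩

lemma degeneracy_le_outdeg {V : Type} [Fintype V] [DecidableEq V] (G : SimpleGraph V)
    [DecidableRel G.Adj] (o : V → V → Prop) [DecidableRel o]
    (hsub : ∀ u v, o u v → G.Adj u v)
    (htot : ∀ u v, G.Adj u v → (o u v ↔ ¬ o v u))
    (hacyc : ∀ v, ¬ Relation.TransGen o v v) :
    degeneracy G ≤ Finset.univ.sup (fun v => (Finset.univ.filter (o v)).card) := by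
  set M := Finset.univ.sup (fun v => (Finset.univ.filter (o v)).card) with hM
  apply Finset.sup_le
  intro v _
  show sSup {k : ℕ | ∃ s : Finset V, v ∈ s ∧ ∀ u ∈ s, k ≤ (s.filter (G.Adj u)).card} ≤ M
  have hne : {k : ℕ | ∃ s : Finset V, v ∈ s ∧ ∀ u ∈ s, k ≤ (s.filter (G.Adj u)).card}.Nonempty :=
    ⟨0, {v}, by simp, by simp⟩
  apply csSup_le hne
  rintro k ⟨s, hvs, hmindeg⟩
  obtain ⟨u, hus, humin⟩ := exists_o_minimal o hacyc s ⟨v, hvs⟩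
  have hsub2 : s.filter (G.Adj u) ⊆ Finset.univ.filter (o u) := by
    intro w hw
    simp only [Finset.mem_filter] at hw ⊢
    refine ⟨Finset.mem_univ w, ?_⟩
    have hadj := hw.2
    by_contra hno
    have how : o w u := by
      by_contra hwu
      exact hno ((htot u w hadj).mpr hwu)
    exact humin w hw.1 (Relation.TransGen.single how)
  calc k ≤ (s.filter (G.Adj u)).card := hmindeg u hus
    _ ≤ (Finset.univ.filter (o u)).card := Finset.card_le_card hsub2
    _ ≤ M := by rw [hM]; exact Finset.le_sup (f := fun v => (Finset.univ.filter (o v)).card) (Finset.mem_univ u)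

lemma numeric_aux (ε' : ℝ) (h1 : 0 < ε') (h2 : ε' ≤ 1) :
    2 * (2 + 3 / (12 / ε')) * (1 + ε' / 27) ^ 2 ≤ 4 + ε' := by
  have h3 : 3 / (12 / ε') = ε' / 4 := by
    rw [div_div_eq_mul_div]; ring
  rw [h3]
  nlinarith [sq_nonneg ε', pow_pos h1 3]

set_option maxHeartbeats 1000000 in
lemma claim1 {V : Type} [Fintype V] [DecidableEq V] (G : SimpleGraph V) [DecidableRel G.Adj]
    (δ lam : ℝ) (hδpos : 0 < δ) (hlampos : 0 < lam)
    (L : ℕ) (ℓ : V → ℕ)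
    (hn2 : 2 ≤ Fintype.card V)
    (hLdef : L = 4 * ⌈Real.logb (1 + δ) (Fintype.card V)⌉₊)
    (hInv1 : Invariant1 G δ lam L ℓ)
    (hInv2 : Invariant2 G δ L ℓ)
    (v : V) :
    (upDeg G ℓ v (ℓ v) : ℝ) ≤ (2 * (2 + 3 / lam) * (1 + δ) ^ 2) * degeneracy G := by
  have hδ1 : (1:ℝ) < 1 + δ := by linarith
  have hδ0 : (0:ℝ) < 1 + δ := by linarith
  have hC0 : (0:ℝ) < 2 + 3 / lam := by positivity
  have hC1 : (2 + 3 / lam) ≤ 2 * (2 + 3 / lam) * (1 + δ) ^ 2 := by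
    nlinarith [hC0, hδ0, sq_nonneg δ, mul_pos hC0 (mul_pos hδ0 hδ0)]
  have hLpos : 0 < L := by
    rw [hLdef]
    have h1 : (0:ℝ) < Real.logb (1 + δ) (Fintype.card V) := by
      apply Real.logb_pos hδ1
      exact_mod_cast lt_of_lt_of_le one_lt_two (by exact_mod_cast hn2)
    have := Nat.ceil_pos.mpr h1
    omega
  by_cases h0 : upDeg G ℓ v (ℓ v) = 0
  · rw [h0]
    push_cast
    positivity
  -- v has an up-neighbor, so degeneracy ≥ 1
  have hd1 : 1 ≤ degeneracy G := by
    obtain ⟨w, hw⟩ := Finset.card_pos.mp (Nat.pos_of_ne_zero h0)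
    simp only [upDeg, Finset.mem_filter, SimpleGraph.mem_neighborFinset] at hw
    have hvw : G.Adj v w := hw.1
    have hne : v ≠ w := G.ne_of_adj hvw
    apply le_degeneracy G 1 {v, w} ⟨v, by simp⟩
    intro u hu
    rw [Finset.one_le_card]
    simp only [Finset.mem_insert, Finset.mem_singleton] at hu
    rcases hu with rfl | rfl
    · exact ⟨w, by simp [hvw]⟩
    · exact ⟨v, by simp [hvw.symm]⟩
  have hd1' : (1:ℝ) ≤ (degeneracy G : ℝ) := by exact_mod_cast hd1
  obtain ⟨g, hgdef⟩ : ∃ g, g = ℓ v / L := ⟨_, rfl⟩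
  rcases Nat.eq_zero_or_pos g with hg0 | hg1
  · -- g = 0 : trivial bound
    have h1 := hInv1 v
    rw [← hgdef, hg0, pow_zero, mul_one] at h1
    calc (upDeg G ℓ v (ℓ v) : ℝ) ≤ 2 + 3 / lam := h1
      _ ≤ 2 * (2 + 3 / lam) * (1 + δ) ^ 2 := hC1
      _ ≤ (2 * (2 + 3 / lam) * (1 + δ) ^ 2) * degeneracy G := by nlinarith
  -- main case : g ≥ 1
  obtain ⟨Z, hZdef⟩ : ∃ Z : ℕ → Finset V, Z = fun j => Finset.univ.filter (fun w => j ≤ ℓ w) :=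
    ⟨_, rfl⟩
  have hZcard : ∀ j, (Z j).card ≤ Fintype.card V := fun j => Finset.card_le_univ _
  have hZv : ∀ j, j ≤ ℓ v → v ∈ Z j := by
    intro j hj; simp [hZdef, hj]
  have hgL : g * L ≤ ℓ v := hgdef ▸ Nat.div_mul_le_self _ _
  have hgL' : (g - 1) * L + L ≤ ℓ v := by
    have h1 : (g - 1) * L = g * L - L := by rw [Nat.sub_one_mul]
    have h2 : L ≤ g * L := Nat.le_mul_of_pos_left L hg1
    omega
  -- Step A : find a level j where Z does not shrink too fast
  have hstepA : ∃ j : ℕ, (g - 1) * L < j ∧ j ≤ ℓ v ∧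
      ((Z (j - 1)).card : ℝ) ≤ (1 + δ) * ((Z j).card : ℝ) := by
    by_contra hno
    push_neg at hno
    have hchain : ∀ t, t ≤ ℓ v - (g - 1) * L →
        (1 + δ) ^ t * ((Z (ℓ v)).card : ℝ) ≤ ((Z (ℓ v - t)).card : ℝ) := by
      intro t
      induction t with
      | zero => intro _; simp
      | succ t iht =>
        intro ht
        have h1 := iht (by omega)
        have h2 := hno (ℓ v - t) (by omega) (by omega)
        have he : ℓ v - t - 1 = ℓ v - (t + 1) := by omega
        rw [he] at h2
        calc (1 + δ) ^ (t + 1) * ((Z (ℓ v)).card : ℝ)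
            = (1 + δ) * ((1 + δ) ^ t * ((Z (ℓ v)).card : ℝ)) := by ring
          _ ≤ (1 + δ) * ((Z (ℓ v - t)).card : ℝ) :=
              mul_le_mul_of_nonneg_left h1 (le_of_lt hδ0)
          _ ≤ ((Z (ℓ v - (t + 1))).card : ℝ) := le_of_lt h2
    obtain ⟨W, hWdef⟩ : ∃ W, W = ℓ v - (g - 1) * L := ⟨_, rfl⟩
    have hWL : L ≤ W := by omega
    have h1 : (1 + δ) ^ W * ((Z (ℓ v)).card : ℝ) ≤ ((Z ((g - 1) * L)).card : ℝ) := by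
      have := hchain W (le_of_eq hWdef)
      rwa [show ℓ v - W = (g - 1) * L by omega] at this
    have hcv : (1:ℝ) ≤ ((Z (ℓ v)).card : ℝ) := by
      have : 0 < (Z (ℓ v)).card := Finset.card_pos.mpr ⟨v, hZv _ le_rfl⟩
      exact_mod_cast this
    have hWpow : (1 + δ) ^ L ≤ (1 + δ) ^ W := pow_le_pow_right₀ (le_of_lt hδ1) hWL
    obtain ⟨n, hndef⟩ : ∃ n, n = Fintype.card V := ⟨_, rfl⟩
    obtain ⟨c, hcdef⟩ : ∃ c, c = ⌈Real.logb (1 + δ) (n : ℝ)⌉₊ := ⟨_, rfl⟩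
    have hn2' : (2:ℝ) ≤ (n:ℝ) := by rw [hndef]; exact_mod_cast hn2
    have hnc : (n : ℝ) ≤ (1 + δ) ^ c := by
      have h2 : Real.logb (1 + δ) n ≤ (c : ℝ) := hcdef ▸ Nat.le_ceil _
      have h3 : (1 + δ) ^ (Real.logb (1 + δ) (n : ℝ)) ≤ (1 + δ) ^ (c : ℝ) :=
        (Real.rpow_le_rpow_left_iff hδ1).mpr h2
      rwa [Real.rpow_logb hδ0 (ne_of_gt hδ1) (by linarith : (0:ℝ) < (n:ℝ)),
        Real.rpow_natCast] at h3
    have hLc : (1 + δ) ^ L = ((1 + δ) ^ c) ^ 4 := by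
      rw [hLdef, ← hndef, ← hcdef, Nat.mul_comm, pow_mul]
    have hn4 : ((n : ℝ)) ^ 4 ≤ (1 + δ) ^ L := by
      rw [hLc]
      exact pow_le_pow_left₀ (by linarith) hnc 4
    have hcontr : ((Z ((g - 1) * L)).card : ℝ) ≤ (n : ℝ) := by
      rw [hndef]; exact_mod_cast hZcard _
    have hfin : ((n:ℝ)) ^ 4 ≤ (n:ℝ) := by
      calc ((n:ℝ)) ^ 4 ≤ (1 + δ) ^ L := hn4
        _ ≤ (1 + δ) ^ W := hWpow
        _ = (1 + δ) ^ W * 1 := (mul_one _).symm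
        _ ≤ (1 + δ) ^ W * ((Z (ℓ v)).card : ℝ) :=
            mul_le_mul_of_nonneg_left hcv (by positivity)
        _ ≤ ((Z ((g - 1) * L)).card : ℝ) := h1
        _ ≤ (n : ℝ) := hcontr
    have hx1 : (0:ℝ) < ((n:ℝ) - 1) * (n:ℝ) ^ 3 :=
      mul_pos (by linarith) (by positivity)
    have hx2 : (0:ℝ) < ((n:ℝ) ^ 2 - 1) * (n:ℝ) :=
      mul_pos (by nlinarith) (by linarith)
    nlinarith [hx1, hx2, hfin]
  obtain ⟨j, hj1, hj2, hj3⟩ := hstepA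
  -- Step B : build a dense subgraph
  obtain ⟨A, hAdef⟩ : ∃ A, A = Z j := ⟨_, rfl⟩
  obtain ⟨S, hSdef⟩ : ∃ S, S = Z (j - 1) := ⟨_, rfl⟩
  have hj0 : 1 ≤ j := by omega
  have hvA : v ∈ A := hAdef ▸ hZv j hj2
  have hApos : 0 < A.card := Finset.card_pos.mpr ⟨v, hvA⟩
  have hAS : A ⊆ S := by
    intro w hw
    rw [hAdef] at hw
    rw [hSdef]
    simp only [hZdef, Finset.mem_filter] at hw ⊢
    exact ⟨hw.1, by omega⟩
  have hSpos : 0 < S.card := Finset.card_pos.mpr ⟨v, hAS hvA⟩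
  obtain ⟨D, hDdef⟩ : ∃ D : ℝ, D = (1 + δ) ^ (g - 1) := ⟨_, rfl⟩
  have hDpos : (0:ℝ) < D := hDdef ▸ by positivity
  have hD1 : (1:ℝ) ≤ D := hDdef ▸ by
    simpa using pow_le_pow_right₀ (le_of_lt hδ1) (Nat.zero_le (g - 1))
  have hAdeg : ∀ u ∈ A, D ≤ ((S.filter (G.Adj u)).card : ℝ) := by
    intro u hu
    rw [hAdef] at hu
    simp only [hZdef, Finset.mem_filter] at hu
    have hju : j ≤ ℓ u := hu.2
    have hupos : 0 < ℓ u := by omega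
    have h1 := hInv2 u hupos
    have h2 : g - 1 ≤ (ℓ u - 1) / L := by
      rw [Nat.le_div_iff_mul_le hLpos]
      omega
    have h3 : D ≤ (1 + δ) ^ ((ℓ u - 1) / L) :=
      hDdef ▸ pow_le_pow_right₀ (le_of_lt hδ1) h2
    have h4 : upDeg G ℓ u (ℓ u - 1) ≤ (S.filter (G.Adj u)).card := by
      apply Finset.card_le_card
      intro w hw
      simp only [upDeg, Finset.mem_filter, SimpleGraph.mem_neighborFinset] at hw
      rw [hSdef]
      simp only [hZdef, Finset.mem_filter]
      exact ⟨⟨Finset.mem_univ w, by omega⟩, hw.1⟩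
    calc D ≤ (1 + δ) ^ ((ℓ u - 1) / L) := h3
      _ ≤ (upDeg G ℓ u (ℓ u - 1) : ℝ) := h1
      _ ≤ ((S.filter (G.Adj u)).card : ℝ) := by exact_mod_cast h4
  obtain ⟨Sdeg, hSdegdef⟩ : ∃ Sdeg, Sdeg = ∑ u ∈ S, (S.filter (G.Adj u)).card := ⟨_, rfl⟩
  have hsum : (A.card : ℝ) * D ≤ (Sdeg : ℝ) := by
    have h1 : (A.card : ℝ) * D = ∑ u ∈ A, D := by
      rw [Finset.sum_const, nsmul_eq_mul]
    rw [h1, hSdegdef]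
    push_cast
    calc ∑ _u ∈ A, D ≤ ∑ u ∈ A, ((S.filter (G.Adj u)).card : ℝ) :=
          Finset.sum_le_sum hAdeg
      _ ≤ ∑ u ∈ S, ((S.filter (G.Adj u)).card : ℝ) :=
          Finset.sum_le_sum_of_subset_of_nonneg hAS (by intros; positivity)
  obtain ⟨k, hkdef⟩ : ∃ k : ℕ, k = ⌈(Sdeg : ℝ) / (2 * S.card)⌉₊ := ⟨_, rfl⟩
  have hSpos' : (0:ℝ) < (S.card : ℝ) := by exact_mod_cast hSpos
  have hApos' : (0:ℝ) < (A.card : ℝ) := by exact_mod_cast hApos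
  have hSdegpos : (0:ℝ) < (Sdeg : ℝ) := by nlinarith
  have hratpos : (0:ℝ) < (Sdeg : ℝ) / (2 * S.card) := by positivity
  have hk1 : 1 ≤ k := by
    rw [hkdef]
    exact Nat.one_le_iff_ne_zero.mpr (fun h => absurd (Nat.ceil_eq_zero.mp h) (not_le.mpr hratpos))
  -- k ≤ degeneracy
  have hkdeg : k ≤ degeneracy G := by
    have hceil : ((k : ℝ)) < (Sdeg : ℝ) / (2 * S.card) + 1 :=
      hkdef ▸ Nat.ceil_lt_add_one (le_of_lt hratpos)
    have hlt : 2 * ((k:ℝ) - 1) * S.card < (Sdeg : ℝ) := by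
      have h2S : (0:ℝ) < 2 * S.card := by positivity
      rw [div_add' _ _ _ (ne_of_gt h2S), lt_div_iff₀ h2S] at hceil
      nlinarith
    have hltn : 2 * (k - 1) * S.card < Sdeg := by
      have hcast : ((2 * (k - 1) * S.card : ℕ) : ℝ) = 2 * ((k:ℝ) - 1) * S.card := by
        push_cast [Nat.cast_sub hk1]
        ring
      exact_mod_cast hcast ▸ hlt
    obtain ⟨T, hTne, hTdeg⟩ := peel_s3 G (k - 1) S (hSdegdef ▸ hltn)
    exact le_degeneracy G k T hTne (fun u hu => by
      have := hTdeg u hu; omega)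
  -- D ≤ 2 (1+δ) k
  have hDk : D ≤ 2 * (1 + δ) * (k : ℝ) := by
    have h1 : (Sdeg : ℝ) / (2 * S.card) ≤ (k : ℝ) := hkdef ▸ Nat.le_ceil _
    have h2 : (Sdeg : ℝ) ≤ (k : ℝ) * (2 * S.card) := by
      rwa [div_le_iff₀ (by positivity)] at h1
    have h3 : (S.card : ℝ) ≤ (1 + δ) * (A.card : ℝ) := by
      rw [hSdef, hAdef]; exact hj3
    have hk0 : (0:ℝ) ≤ (k : ℝ) := Nat.cast_nonneg k
    nlinarith
  -- finish
  have hg1' : g - 1 + 1 = g := by omega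
  have hInv1v := hInv1 v
  rw [← hgdef] at hInv1v
  have hpow : (1 + δ) ^ g = D * (1 + δ) := by
    rw [hDdef, ← pow_succ, hg1']
  have hkd' : (k : ℝ) ≤ (degeneracy G : ℝ) := by exact_mod_cast hkdeg
  calc (upDeg G ℓ v (ℓ v) : ℝ) ≤ (2 + 3 / lam) * (1 + δ) ^ g := hInv1v
    _ = (2 + 3 / lam) * (1 + δ) * D := by rw [hpow]; ring
    _ ≤ (2 + 3 / lam) * (1 + δ) * (2 * (1 + δ) * (k : ℝ)) := by
        apply mul_le_mul_of_nonneg_left hDk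
        positivity
    _ = (2 * (2 + 3 / lam) * (1 + δ) ^ 2) * (k : ℝ) := by ring
    _ ≤ (2 * (2 + 3 / lam) * (1 + δ) ^ 2) * (degeneracy G : ℝ) := by
        apply mul_le_mul_of_nonneg_left hkd'
        positivity

/-- For every `ε > 0` there are constants `δ, λ > 0` such that in any parallel
level data structure setting satisfying both invariants with
`L ≥ log_{(2+3/λ)(1+δ)/2}(4m+1)`: every vertex has at most `(4+ε)·d` neighbors at the same
or higher level (`d` = degeneracy); the level orientation (an orientation of `G`) is acyclic with
maximum out-degree at most `(4+ε)·d`; and `d` is at most the maximum out-degree of every acyclic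
orientation of `G`, so this is a `(4+ε)`-approximate low out-degree orientation. -/
theorem plds_low_outdegree_orientation :
    ∀ ε : ℝ, 0 < ε → ∃ δ lam : ℝ, 0 < δ ∧ 0 < lam ∧
      ∀ (V : Type) [Fintype V] [LinearOrder V] (G : SimpleGraph V) [DecidableRel G.Adj],
        1 ≤ G.edgeFinset.card →
        ∀ (K L : ℕ) (ℓ : V → ℕ), 1 ≤ K →
          L = 4 * ⌈Real.logb (1 + δ) (Fintype.card V)⌉₊ →
          Real.logb ((2 + 3 / lam) * (1 + δ) / 2) (4 * G.edgeFinset.card + 1) ≤ (L : ℝ) →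
          (∀ v, ℓ v < K) →
          Invariant1 G δ lam L ℓ →
          Invariant2 G δ L ℓ →
          (∀ v : V, (upDeg G ℓ v (ℓ v) : ℝ) ≤ (4 + ε) * degeneracy G) ∧
          (∀ u v : V, G.Adj u v → (levelOrient G ℓ u v ↔ ¬ levelOrient G ℓ v u)) ∧
          (∀ v : V, ¬ Relation.TransGen (levelOrient G ℓ) v v) ∧
          (∀ v : V, ((Finset.univ.filter (levelOrient G ℓ v)).card : ℝ) ≤
            (4 + ε) * degeneracy G) ∧
          (∀ (o : V → V → Prop) [DecidableRel o],
            (∀ u v, o u v → G.Adj u v) →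
            (∀ u v, G.Adj u v → (o u v ↔ ¬ o v u)) →
            (∀ v, ¬ Relation.TransGen o v v) →
            degeneracy G ≤ Finset.univ.sup (fun v => (Finset.univ.filter (o v)).card)) := by
  intro ε hε
  have hε'pos : 0 < min ε 1 := lt_min hε one_pos
  have hε'le1 : min ε 1 ≤ 1 := min_le_right _ _
  have hε'leε : min ε 1 ≤ ε := min_le_left _ _
  refine ⟨min ε 1 / 27, 12 / min ε 1, by positivity, by positivity, ?_⟩
  intro V _ _ G _ hm K L ℓ hK hLdef _hlogb hKlt hInv1 hInv2
  have hδpos : (0:ℝ) < min ε 1 / 27 := by positivity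
  have hlampos : (0:ℝ) < 12 / min ε 1 := by positivity
  -- the graph has an edge, hence at least 2 vertices
  have hadj : ∃ x y : V, G.Adj x y := by
    obtain ⟨e, he⟩ := Finset.card_pos.mp hm
    induction e using Sym2.ind with
    | _ x y => exact ⟨x, y, SimpleGraph.mem_edgeFinset.mp he⟩
  have hn2 : 2 ≤ Fintype.card V := by
    obtain ⟨x, y, hxy⟩ := hadj
    exact Fintype.one_lt_card_iff_nontrivial.mpr ⟨x, y, G.ne_of_adj hxy⟩
  have hnum := numeric_aux (min ε 1) hε'pos hε'le1
  have h4ε : (0:ℝ) < 4 + ε := by linarith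
  have hmain : ∀ v : V, (upDeg G ℓ v (ℓ v) : ℝ) ≤ (4 + ε) * degeneracy G := by
    intro v
    have h1 := claim1 G (min ε 1 / 27) (12 / min ε 1) hδpos hlampos L ℓ hn2 hLdef hInv1 hInv2 v
    have hdeg0 : (0:ℝ) ≤ (degeneracy G : ℝ) := Nat.cast_nonneg _
    calc (upDeg G ℓ v (ℓ v) : ℝ)
        ≤ (2 * (2 + 3 / (12 / min ε 1)) * (1 + min ε 1 / 27) ^ 2) * degeneracy G := h1
      _ ≤ (4 + min ε 1) * degeneracy G := mul_le_mul_of_nonneg_right hnum hdeg0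
      _ ≤ (4 + ε) * degeneracy G := mul_le_mul_of_nonneg_right (by linarith) hdeg0
  refine ⟨hmain, ?_, ?_, ?_, ?_⟩
  · -- totality on edges
    intro u w huw
    constructor
    · rintro ⟨_, h1⟩ ⟨_, h2⟩
      rcases h1 with h1 | ⟨e1, l1⟩ <;> rcases h2 with h2 | ⟨e2, l2⟩
      · omega
      · omega
      · omega
      · exact absurd l2 (not_lt.mpr (le_of_lt l1))
    · intro hnot
      refine ⟨huw, ?_⟩
      rcases lt_trichotomy (ℓ u) (ℓ w) with h | h | h
      · exact Or.inl h
      · refine Or.inr ⟨h, ?_⟩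
        rcases lt_trichotomy u w with h' | h' | h'
        · exact h'
        · exact absurd h' (G.ne_of_adj huw)
        · exact absurd ⟨huw.symm, Or.inr ⟨h.symm, h'⟩⟩ hnot
      · exact absurd ⟨huw.symm, Or.inl h⟩ hnot
  · -- acyclicity
    intro v hv
    have key : ∀ a b : V, Relation.TransGen (levelOrient G ℓ) a b →
        (ℓ a < ℓ b ∨ (ℓ a = ℓ b ∧ a < b)) := by
      intro a b h
      induction h with
      | single h => exact h.2
      | tail _ h2 ih =>
        rcases ih with h3 | ⟨e3, l3⟩ <;> rcases h2.2 with h4 | ⟨e4, l4⟩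
        · exact Or.inl (by omega)
        · exact Or.inl (by omega)
        · exact Or.inl (by omega)
        · exact Or.inr ⟨by omega, lt_trans l3 l4⟩
    rcases key v v hv with h | ⟨_, h⟩
    · omega
    · exact absurd h (lt_irrefl v)
  · -- out-degree bound for the level orientation
    intro v
    have hsub : Finset.univ.filter (levelOrient G ℓ v) ⊆
        (G.neighborFinset v).filter (fun w => ℓ v ≤ ℓ w) := by
      intro w hw
      simp only [Finset.mem_filter, Finset.mem_univ, true_and] at hw
      obtain ⟨hadj', hlt⟩ := hw
      simp only [Finset.mem_filter, SimpleGraph.mem_neighborFinset]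
      exact ⟨hadj', by omega⟩
    calc ((Finset.univ.filter (levelOrient G ℓ v)).card : ℝ)
        ≤ (upDeg G ℓ v (ℓ v) : ℝ) := by
          exact_mod_cast Finset.card_le_card hsub
      _ ≤ (4 + ε) * degeneracy G := hmain v
  · -- lower bound for every acyclic orientation
    intro o _ ho1 ho2 ho3
    exact degeneracy_le_outdeg G o ho1 ho2 ho3
end

section
/- Let G, δ, λ, K, L, gn be as in the parallel level data structure setting, let ℓ be a level assignment, and for a vertex v and a level l define f_v(l) = |{w ∈ N(v) : ℓ(w) ≥ l}|. Say a level l is valid for v if f_v(l) ≤ (2+3/λ)(1+δ)^{gn(l)} and, in case l > 0, also f_v(l−1) ≥ (1+δ)^{gn(l−1)}. Assume the topmost level K−1 lies in a group of index at least ⌈log_{1+δ} n⌉. Then: (a) if v violates Invariant 1 at its current level, i.e. f_v(ℓ(v)) > (2+3/λ)(1+δ)^{gn(ℓ(v))}, there exists a level l with ℓ(v) < l ≤ K−1 that is valid for v; (b) if v violates Invariant 2 at its current level, i.e. ℓ(v) > 0 and f_v(ℓ(v)−1) < (1+δ)^{gn(ℓ(v)−1)}, there exists a level l < ℓ(v)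 at which v satisfies both invariants, or v has degree 0 and level l = 0 is valid for v. -/
/-- Level `l` is *valid* for `v`: `v` would satisfy both invariants if placed at level `l`,
i.e. `f_v(l) ≤ (2+3/λ)(1+δ)^{gn(l)}` and, if `l > 0`, `f_v(l-1) ≥ (1+δ)^{gn(l-1)}`, where
`f_v(l)` is the number of neighbors `w` of `v` with `ℓ(w) ≥ l`. -/
def ValidLevel {V : Type} [Fintype V] [DecidableEq V] (G : SimpleGraph V) [DecidableRel G.Adj]
    (δ lam : ℝ) (L : ℕ) (ℓ : V → ℕ) (v : V) (l : ℕ) : Prop :=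
  (upDeg G ℓ v l : ℝ) ≤ (2 + 3 / lam) * (1 + δ) ^ (l / L) ∧
  (0 < l → (1 + δ) ^ ((l - 1) / L) ≤ (upDeg G ℓ v (l - 1) : ℝ))

/-- Suppose the topmost level `K-1` lies in a group of index at least
`⌈log_{1+δ} n⌉`.  (a) If `v` violates Invariant 1 at its current level, there is a level
`l` with `ℓ(v) < l ≤ K-1` that is valid for `v`.  (b) If `v` violates Invariant 2 at its
current level, there is a level `l < ℓ(v)` at which `v` satisfies both invariants, or `v`
has degree `0` and level `0` is valid for `v`. -/
theorem plds_good_level_exists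
    {V : Type} [Fintype V] [DecidableEq V] (G : SimpleGraph V) [DecidableRel G.Adj]
    (hm : 1 ≤ G.edgeFinset.card)
    (δ lam : ℝ) (hδ : 0 < δ) (hlam : 0 < lam)
    (K L : ℕ) (hK : 1 ≤ K)
    (hLdef : L = 4 * ⌈Real.logb (1 + δ) (Fintype.card V)⌉₊)
    (ℓ : V → ℕ) (hℓ : ∀ v, ℓ v < K)
    (htop : ⌈Real.logb (1 + δ) (Fintype.card V)⌉₊ ≤ (K - 1) / L) :
    (∀ v : V, (2 + 3 / lam) * (1 + δ) ^ (ℓ v / L) < (upDeg G ℓ v (ℓ v) : ℝ) →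
      ∃ l : ℕ, ℓ v < l ∧ l ≤ K - 1 ∧ ValidLevel G δ lam L ℓ v l) ∧
    (∀ v : V, 0 < ℓ v → (upDeg G ℓ v (ℓ v - 1) : ℝ) < (1 + δ) ^ ((ℓ v - 1) / L) →
      (∃ l : ℕ, l < ℓ v ∧ ValidLevel G δ lam L ℓ v l) ∨
        (G.degree v = 0 ∧ ValidLevel G δ lam L ℓ v 0)) := by
  classical
  have hb1 : (1:ℝ) < 1 + δ := by linarith
  have hb0 : (0:ℝ) < 1 + δ := by linarith
  have hC : (1:ℝ) ≤ 2 + 3 / lam := by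
    have : 0 < 3 / lam := by positivity
    linarith
  have hpow : ∀ k : ℕ, (0:ℝ) < (1+δ)^k := fun k => pow_pos hb0 k
  have hpowmono : ∀ k₁ k₂ : ℕ, k₁ ≤ k₂ → (1+δ)^k₁ ≤ (1+δ)^k₂ :=
    fun k₁ k₂ h => pow_le_pow_right₀ hb1.le h
  have hf_lt : ∀ (v : V) (l : ℕ), (upDeg G ℓ v l : ℝ) < (1+δ) ^ ((K-1)/L) := by
    intro v l
    have hdeg : upDeg G ℓ v l < Fintype.card V := by
      calc upDeg G ℓ v l ≤ G.degree v := Finset.card_filter_le _ _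
        _ < Fintype.card V := G.degree_lt_card_verts v
    have hn : 0 < Fintype.card V := Fintype.card_pos_iff.mpr ⟨v⟩
    have h1 : (Fintype.card V : ℝ) ≤ (1+δ) ^ (⌈Real.logb (1 + δ) (Fintype.card V)⌉₊) := by
      have heq := Real.rpow_logb hb0 (ne_of_gt hb1)
        (by exact_mod_cast hn : (0:ℝ) < (Fintype.card V :ℝ))
      calc (Fintype.card V : ℝ)
          = (1+δ) ^ (Real.logb (1+δ) (Fintype.card V)) := heq.symm
        _ ≤ (1+δ) ^ ((⌈Real.logb (1 + δ) (Fintype.card V)⌉₊ : ℝ)) :=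
            Real.rpow_le_rpow_of_exponent_le hb1.le (Nat.le_ceil _)
        _ = (1+δ) ^ (⌈Real.logb (1 + δ) (Fintype.card V)⌉₊) := Real.rpow_natCast _ _
    have h2 : (upDeg G ℓ v l : ℝ) < (Fintype.card V : ℝ) := by exact_mod_cast hdeg
    exact h2.trans_le (h1.trans (hpowmono _ _ htop))
  constructor
  · -- part (a)
    intro v hviol
    have hne : ℓ v ≠ K - 1 := by
      intro h
      have h2 := hf_lt v (ℓ v)
      rw [h] at h2 hviol
      nlinarith [hpow ((K-1)/L)]
    have hlt' : ℓ v < K - 1 := lt_of_le_of_ne (by have := hℓ v; omega) hne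
    have hPtop : ℓ v < K-1 ∧ K-1 ≤ K-1 ∧
        (upDeg G ℓ v (K-1) : ℝ) ≤ (2+3/lam)*(1+δ)^((K-1)/L) := by
      refine ⟨hlt', le_refl _, ?_⟩
      nlinarith [hf_lt v (K-1), hpow ((K-1)/L)]
    have hEx : ∃ l : ℕ, ℓ v < l ∧ l ≤ K-1 ∧
        (upDeg G ℓ v l : ℝ) ≤ (2+3/lam)*(1+δ)^(l/L) := ⟨K-1, hPtop⟩
    set l₀ := Nat.find hEx with hl₀def
    obtain ⟨h1, h2, h3⟩ := Nat.find_spec hEx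
    refine ⟨l₀, h1, h2, h3, ?_⟩
    intro _
    rcases Nat.lt_or_ge (ℓ v) (l₀ - 1) with hgt | hle
    · have hnot := Nat.find_min hEx (m := l₀ - 1) (by omega)
      push_neg at hnot
      have h4 := hnot hgt (by omega)
      nlinarith [hpow ((l₀-1)/L)]
    · have heq : l₀ - 1 = ℓ v := by omega
      rw [heq]
      nlinarith [hpow ((ℓ v)/L)]
  · -- part (b)
    intro v hpos hviol
    left
    set P : ℕ → Prop := fun l => (1+δ)^((l-1)/L) ≤ (upDeg G ℓ v (l-1) : ℝ) with hPdef
    set l₀ := Nat.findGreatest P (ℓ v - 1) with hl₀def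
    have hl₀le : l₀ ≤ ℓ v - 1 := Nat.findGreatest_le _
    refine ⟨l₀, lt_of_le_of_lt hl₀le (Nat.sub_lt hpos one_pos), ?_, ?_⟩
    · rcases eq_or_lt_of_le hl₀le with heq | hlt
      · rw [heq]
        nlinarith [hpow ((ℓ v - 1)/L)]
      · have hnot : ¬ P (l₀ + 1) := Nat.findGreatest_is_greatest (n := ℓ v - 1) (by omega) (by omega)
        rw [hPdef] at hnot
        simp only [Nat.add_sub_cancel, not_le] at hnot
        nlinarith [hpow (l₀/L)]
    · intro h0
      exact Nat.findGreatest_of_ne_zero hl₀def.symm (by omega)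
end

section
/- Let G be a finite simple graph on n ≥ 2 vertices, let ε > 0 and let k > 0 be a real number. Consider the process that starts from G and, in each round, simultaneously removes from the current graph all vertices whose degree in the current graph is at most (2+ε)k. Then after at most ⌈log_{(2+ε)/2}(n)⌉ rounds, every vertex of G whose coreness (in the original graph G) is at most k has been removed. -/
open scoped Classical

/-- One round of peeling with threshold `τ`: from the current vertex set `S`, simultaneously
remove all vertices whose degree in the subgraph induced by `S` is at most `τ`. -/
noncomputable def peelStep {V : Type} [Fintype V] (G : SimpleGraph V) (τ : ℝ)
    (S : Finset V) : Finset V :=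
  S.filter (fun v => τ < ((S.filter (fun w => G.Adj v w)).card : ℝ))

/-!
Let `f = ⌊k⌋`, let `H` be the set of vertices of coreness `> f` (an `(f+1)`-core) and let `B_t`
be the vertices of coreness `≤ f` that survive `t` rounds. Every nonempty set `B` of vertices of
coreness `≤ f` contains a vertex with at most `f` neighbours in `B ∪ H`; peeling such vertices
one by one shows that the degrees into `B ∪ H` summed over `B` are at most `2f|B|`. A vertex of
`B_{t+1}` has more than `(2+ε)k` neighbours in the current graph `⊆ B_t ∪ H`, hence
`(2+ε)k |B_{t+1}| < 2f |B_t| ≤ 2k |B_t|`: the low part shrinks by the factor `(2+ε)/2` per round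
and is empty after `⌈log_{(2+ε)/2} n⌉` rounds.
-/

open Finset

section Peeling

variable {V : Type} (G : SimpleGraph V) [DecidableRel G.Adj]

def degreeIn (s : Finset V) (u : V) : ℕ := #(s.filter (G.Adj u))

variable {G}

theorem degreeIn_mono {s t : Finset V} (h : s ⊆ t) (u : V) : degreeIn G s u ≤ degreeIn G t u :=
  card_le_card (filter_subset_filter _ h)

theorem degreeIn_insert_le [DecidableEq V] (s : Finset V) (u v : V) :
    degreeIn G (insert v s) u ≤ degreeIn G s u + if G.Adj u v then 1 else 0 := by
  unfold degreeIn
  rw [filter_insert]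
  split_ifs
  · exact card_insert_le _ _
  · simp

variable [Fintype V]

theorem mem_peelStep {τ : ℝ} {S : Finset V} {v : V} :
    v ∈ peelStep G τ S ↔ v ∈ S ∧ τ < degreeIn G S v := by
  simp only [peelStep, degreeIn, mem_filter]
  congr!

theorem peelStep_subset (τ : ℝ) (S : Finset V) : peelStep G τ S ⊆ S :=
  fun _ hv => (mem_peelStep.mp hv).1

variable (G)

theorem coreness_bddAbove (v : V) :
    BddAbove {k : ℕ | ∃ s : Finset V, v ∈ s ∧ ∀ u ∈ s, k ≤ degreeIn G s u} :=
  ⟨Fintype.card V, fun _ ⟨s, hv, h⟩ =>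
    (h v hv).trans ((card_filter_le _ _).trans s.card_le_univ)⟩

variable [DecidableEq V] {G}

theorem le_coreness {v : V} {m : ℕ} {s : Finset V} (hv : v ∈ s)
    (h : ∀ u ∈ s, m ≤ degreeIn G s u) : m ≤ coreness G v :=
  le_csSup (coreness_bddAbove G v) ⟨s, hv, h⟩

theorem exists_coreness_le_degreeIn (v : V) :
    ∃ s : Finset V, v ∈ s ∧ ∀ u ∈ s, coreness G v ≤ degreeIn G s u :=
  Nat.sSup_mem (s := {k : ℕ | ∃ s : Finset V, v ∈ s ∧ ∀ u ∈ s, k ≤ degreeIn G s u})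
    ⟨0, {v}, mem_singleton_self v, fun _ _ => Nat.zero_le _⟩ (coreness_bddAbove G v)

variable (G)

noncomputable def highCore (f : ℕ) : Finset V := univ.filter (fun u => f < coreness G u)

variable {G}

theorem lt_degreeIn_highCore {f : ℕ} {u : V} (hu : u ∈ highCore G f) :
    f < degreeIn G (highCore G f) u := by
  have hfu : f < coreness G u := (mem_filter.mp hu).2
  obtain ⟨s, hus, hs⟩ := exists_coreness_le_degreeIn (G := G) u
  have hsub : s ⊆ highCore G f := fun w hw =>
    mem_filter.mpr ⟨mem_univ _, hfu.trans_le (le_coreness hw hs)⟩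
  exact (hfu.trans_le (hs u hus)).trans_le (degreeIn_mono hsub u)

theorem exists_degreeIn_union_le {f : ℕ} {B H : Finset V} (hB : ∀ v ∈ B, coreness G v ≤ f)
    (hH : ∀ u ∈ H, f < degreeIn G H u) (hne : B.Nonempty) :
    ∃ v ∈ B, degreeIn G (B ∪ H) v ≤ f := by
  by_contra! hdeg
  have hmin : ∀ u ∈ B ∪ H, f + 1 ≤ degreeIn G (B ∪ H) u := by
    intro u hu
    rcases mem_union.mp hu with hu | hu
    · exact hdeg u hu
    · exact (hH u hu).trans_le (degreeIn_mono subset_union_right u)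
  obtain ⟨v, hv⟩ := hne
  have := le_coreness (mem_union_left H hv) hmin
  have := hB v hv
  omega

theorem sum_degreeIn_union_le {f : ℕ} {H : Finset V} (hH : ∀ u ∈ H, f < degreeIn G H u)
    (B : Finset V) (hB : ∀ v ∈ B, coreness G v ≤ f) :
    ∑ u ∈ B, degreeIn G (B ∪ H) u ≤ 2 * f * #B := by
  induction B using Finset.strongInduction with
  | _ B ih =>
  rcases B.eq_empty_or_nonempty with rfl | hne
  · simp
  obtain ⟨v, hvB, hv⟩ := exists_degreeIn_union_le hB hH hne
  set B' := B.erase v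
  have hB'sub : B ∪ H ⊆ insert v (B' ∪ H) := by
    rw [← insert_union, insert_erase hvB]
  have hnbrs : ∑ u ∈ B', (if G.Adj u v then 1 else 0) ≤ f := by
    rw [← card_filter]
    refine le_trans (card_le_card fun u hu => ?_) hv
    obtain ⟨huB', hadj⟩ := mem_filter.mp hu
    exact mem_filter.mpr ⟨mem_union_left H (mem_of_mem_erase huB'), hadj.symm⟩
  have hrest : ∑ u ∈ B', degreeIn G (B ∪ H) u ≤ 2 * f * #B' + f :=
    calc ∑ u ∈ B', degreeIn G (B ∪ H) u
        ≤ ∑ u ∈ B', (degreeIn G (B' ∪ H) u + if G.Adj u v then 1 else 0) :=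
          sum_le_sum fun u _ => (degreeIn_mono hB'sub u).trans (degreeIn_insert_le _ u v)
      _ ≤ 2 * f * #B' + f := by
          rw [sum_add_distrib]
          exact add_le_add (ih B' (erase_ssubset hvB) fun u hu => hB u (mem_of_mem_erase hu))
            hnbrs
  have hcard : #B' + 1 = #B := card_erase_add_one hvB
  rw [← add_sum_erase B _ hvB, ← hcard]
  linarith

theorem mul_card_filter_peelStep_lt (τ : ℝ) (f : ℕ) (S : Finset V)
    (hne : ((peelStep G τ S).filter (coreness G · ≤ f)).Nonempty) :
    τ * #((peelStep G τ S).filter (coreness G · ≤ f)) <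
      2 * f * #(S.filter (coreness G · ≤ f)) := by
  set B := S.filter (coreness G · ≤ f)
  set B' := (peelStep G τ S).filter (coreness G · ≤ f)
  have hB'B : B' ⊆ B := filter_subset_filter _ (peelStep_subset τ S)
  have hS : S ⊆ B ∪ highCore G f := fun u hu => by
    by_cases h : coreness G u ≤ f
    · exact mem_union_left _ (mem_filter.mpr ⟨hu, h⟩)
    · exact mem_union_right _ (mem_filter.mpr ⟨mem_univ u, not_le.mp h⟩)
  have hsurv : ∀ u ∈ B', τ < degreeIn G (B ∪ highCore G f) u := fun u hu =>
    (mem_peelStep.mp (mem_filter.mp hu).1).2.trans_le (by exact_mod_cast degreeIn_mono hS u)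
  calc τ * #B' = ∑ u ∈ B', τ := by simp [mul_comm]
    _ < ∑ u ∈ B', (degreeIn G (B ∪ highCore G f) u : ℝ) := sum_lt_sum_of_nonempty hne hsurv
    _ ≤ ∑ u ∈ B, (degreeIn G (B ∪ highCore G f) u : ℝ) :=
        sum_le_sum_of_subset_of_nonneg hB'B fun _ _ _ => by positivity
    _ ≤ 2 * f * #B := by
        exact_mod_cast sum_degreeIn_union_le (fun _ hu => lt_degreeIn_highCore hu) B
          fun _ hu => (mem_filter.mp hu).2

end Peeling

theorem pow_mul_lt_of_mul_lt {b : ℝ} (hb : 0 < b) {a : ℕ → ℕ}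
    (h : ∀ t, a (t + 1) ≠ 0 → b * a (t + 1) < a t) {t : ℕ} (ht : t ≠ 0)
    (hat : a t ≠ 0) :
    b ^ t * a t < a 0 := by
  have hle : ∀ t, b ^ t * a t ≤ a 0 := by
    intro t
    induction t with
    | zero => simp
    | succ t ih =>
      have hstep : b * a (t + 1) ≤ a t := by
        by_cases h0 : a (t + 1) = 0
        · simp [h0]
        · exact (h t h0).le
      calc b ^ (t + 1) * a (t + 1) = b ^ t * (b * a (t + 1)) := by ring
        _ ≤ b ^ t * a t := by gcongr
        _ ≤ a 0 := ih
  obtain ⟨s, rfl⟩ := Nat.exists_eq_succ_of_ne_zero ht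
  calc b ^ (s + 1) * a (s + 1) = b ^ s * (b * a (s + 1)) := by ring
    _ < b ^ s * a s := by gcongr; exact h s hat
    _ ≤ a 0 := hle s

/-- Let `G` have `n ≥ 2` vertices, `ε > 0`, `k > 0`.  Starting from `G` and
repeatedly (simultaneously) removing all vertices of current degree at most `(2+ε)k`, after at
most `⌈log_{(2+ε)/2}(n)⌉` rounds every vertex of coreness at most `k` has been removed. -/
theorem peeling_removes_low_coreness
    {V : Type} [Fintype V] [DecidableEq V] (G : SimpleGraph V) [DecidableRel G.Adj]
    (hn : 2 ≤ Fintype.card V) (ε k : ℝ) (hε : 0 < ε) (hk : 0 < k) :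
    ∀ v : V, (coreness G v : ℝ) ≤ k →
      v ∉ (peelStep G ((2 + ε) * k))^[⌈Real.logb ((2 + ε) / 2) (Fintype.card V)⌉₊]
            Finset.univ := by
  intro v hv hmem
  set b := (2 + ε) / 2
  set T := ⌈Real.logb b (Fintype.card V)⌉₊
  set f := ⌊k⌋₊
  set a : ℕ → ℕ := fun t =>
    #(((peelStep G ((2 + ε) * k))^[t] univ).filter (coreness G · ≤ f))
  have hb : 1 < b := by simp only [b]; linarith
  have hcontract : ∀ t, a (t + 1) ≠ 0 → b * a (t + 1) < a t := by
    intro t ht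
    have hstep := mul_card_filter_peelStep_lt (G := G) ((2 + ε) * k) f
      ((peelStep G ((2 + ε) * k))^[t] univ)
    rw [← Function.iterate_succ_apply' (peelStep G ((2 + ε) * k))] at hstep
    specialize hstep (card_pos.mp (Nat.pos_of_ne_zero ht))
    have hf : (f : ℝ) ≤ k := Nat.floor_le hk.le
    simp only [b]
    nlinarith [mul_le_mul_of_nonneg_right hf (Nat.cast_nonneg (a t))]
  have hT : T ≠ 0 := (Nat.ceil_pos.mpr (Real.logb_pos hb (by exact_mod_cast hn))).ne'
  have hnT : (Fintype.card V : ℝ) ≤ b ^ T := by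
    rw [← Real.rpow_natCast, ← Real.logb_le_iff_le_rpow hb (by positivity)]
    exact Nat.le_ceil _
  have ha0 : a 0 ≤ Fintype.card V := card_le_univ _
  have haT : a T ≠ 0 := (card_pos.mpr ⟨v, mem_filter.mpr ⟨hmem, Nat.le_floor hv⟩⟩).ne'
  have hshrink := pow_mul_lt_of_mul_lt (by positivity) hcontract hT haT
  have : b ^ T ≤ b ^ T * a T :=
    le_mul_of_one_le_right (by positivity) (by exact_mod_cast Nat.one_le_iff_ne_zero.mpr haT)
  linarith [(Nat.cast_le (α := ℝ)).mpr ha0]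
end

section
/- Let G be a finite simple graph admitting an acyclic orientation in which every vertex has out-degree at most σ. Then the edge set of G can be partitioned into at most σ sets F_0, …, F_{σ−1}, each of which is a forest and each of which contains at most one outgoing edge of every vertex. In particular, the arboricity of G is at most σ. -/
/-!
Number the out-edges of every vertex injectively by `0, …, σ - 1` and let `F_i` be the set of
edges carrying label `i`. In `F_i` every vertex has at most one out-edge, so on a cycle of `F_i`
a vertex that is minimal for the (well-founded) orientation would have both of its cycle
neighbours as out-neighbours, and these are distinct.
-/

open Finset Relation

namespace SimpleGraph

theorem isAcyclic_of_wellFounded_orientation {V : Type*} {H : SimpleGraph V} {r : V → V → Prop}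
    (hwf : WellFounded r) (htot : ∀ u v, H.Adj u v → r u v ∨ r v u)
    (huniq : ∀ v w₁ w₂, H.Adj v w₁ → H.Adj v w₂ → r v w₁ → r v w₂ → w₁ = w₂) :
    H.IsAcyclic := by
  classical
  intro v c hc
  obtain ⟨m, hm, hmin⟩ := hwf.has_min {x | x ∈ c.support} ⟨v, c.start_mem_support⟩
  set c' := c.rotate m hm
  have hc' : c'.IsCycle := hc.rotate hm
  have hout : ∀ x, H.Adj m x → x ∈ c'.support → r m x := fun x hx hxc =>
    (htot m x hx).resolve_right
      (hmin x ((Walk.mem_support_rotate_iff c m hm).1 hxc))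
  have hsnd := c'.adj_snd hc'.not_nil
  have hpen := (c'.adj_penultimate hc'.not_nil).symm
  exact hc'.snd_ne_penultimate <| huniq m _ _ hsnd hpen
    (hout _ hsnd (c'.getVert_mem_support 1)) (hout _ hpen (c'.getVert_mem_support _))

end SimpleGraph

theorem wellFounded_of_forall_not_transGen_self {V : Type*} [Finite V] {r : V → V → Prop}
    (hacyc : ∀ v, ¬ TransGen r v v) : WellFounded r :=
  have : Std.Irrefl (TransGen r) := ⟨hacyc⟩
  Subrelation.wf TransGen.single (Finite.wellFounded_of_trans_of_irrefl (TransGen r))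

theorem exists_outEdge_label {V : Type*} [Fintype V] (o : V → V → Prop) [DecidableRel o]
    {σ : ℕ} (houtdeg : ∀ v, #{w | o v w} ≤ σ) :
    ∃ c : V → V → ℕ, (∀ v w, o v w → c v w < σ) ∧
      ∀ v w₁ w₂, o v w₁ → o v w₂ → c v w₁ = c v w₂ → w₁ = w₂ := by
  classical
  refine ⟨fun v w => (univ.filter (o v)).toList.idxOf w, fun v w h => ?_,
    fun v w₁ w₂ h₁ _ => (List.idxOf_inj (by simpa using h₁)).1⟩
  calc _ < (univ.filter (o v)).toList.length := List.idxOf_lt_length_iff.2 (by simpa using h)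
    _ ≤ σ := by simpa using houtdeg v

section OrientedColorClass

variable {V : Type*} {o : V → V → Prop} {c : V → V → ℕ}

def orientedColorClass (o : V → V → Prop) (c : V → V → ℕ) (i : ℕ) : Set (Sym2 V) :=
  {e | ∃ v w, o v w ∧ c v w = i ∧ s(v, w) = e}

theorem mem_orientedColorClass {i : ℕ} {v w : V} :
    s(v, w) ∈ orientedColorClass o c i ↔ o v w ∧ c v w = i ∨ o w v ∧ c w v = i := by
  constructor
  · rintro ⟨a, b, hab, rfl, he⟩
    rcases Sym2.eq_iff.1 he with ⟨rfl, rfl⟩ | ⟨rfl, rfl⟩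
    exacts [.inl ⟨hab, rfl⟩, .inr ⟨hab, rfl⟩]
  · rintro (⟨h, hc⟩ | ⟨h, hc⟩)
    exacts [⟨v, w, h, hc, rfl⟩, ⟨w, v, h, hc, Sym2.eq_swap⟩]

theorem label_eq_of_mem_orientedColorClass (hasym : ∀ u v, o u v → ¬ o v u) {i : ℕ} {v w : V}
    (he : s(v, w) ∈ orientedColorClass o c i) (hvw : o v w) : c v w = i :=
  (mem_orientedColorClass.1 he).elim And.right fun h => absurd h.1 (hasym v w hvw)

theorem orientedColorClass_subset_edgeSet {G : SimpleGraph V} (hsub : ∀ u v, o u v → G.Adj u v)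
    (i : ℕ) : orientedColorClass o c i ⊆ G.edgeSet := by
  rintro _ ⟨v, w, h, -, rfl⟩
  exact hsub v w h

theorem iUnion_orientedColorClass {G : SimpleGraph V} {σ : ℕ}
    (hsub : ∀ u v, o u v → G.Adj u v) (htot : ∀ u v, G.Adj u v → o u v ∨ o v u)
    (hlt : ∀ v w, o v w → c v w < σ) :
    ⋃ i : Fin σ, orientedColorClass o c i = G.edgeSet := by
  refine (Set.iUnion_subset fun i : Fin σ => orientedColorClass_subset_edgeSet hsub i).antisymm ?_
  intro e he
  induction e using Sym2.ind with
  | _ v w =>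
    rcases htot v w he with h | h
    · exact Set.mem_iUnion.2 ⟨⟨c v w, hlt v w h⟩, mem_orientedColorClass.2 (.inl ⟨h, rfl⟩)⟩
    · exact Set.mem_iUnion.2 ⟨⟨c w v, hlt w v h⟩, mem_orientedColorClass.2 (.inr ⟨h, rfl⟩)⟩

theorem disjoint_orientedColorClass (hasym : ∀ u v, o u v → ¬ o v u) {i j : ℕ} (hij : i ≠ j) :
    Disjoint (orientedColorClass o c i) (orientedColorClass o c j) := by
  rw [Set.disjoint_left]
  rintro _ ⟨v, w, h, rfl, rfl⟩ hj
  exact hij (label_eq_of_mem_orientedColorClass hasym hj h)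

theorem eq_of_mem_orientedColorClass (hasym : ∀ u v, o u v → ¬ o v u)
    (hinj : ∀ v w₁ w₂, o v w₁ → o v w₂ → c v w₁ = c v w₂ → w₁ = w₂) {i : ℕ} {v w₁ w₂ : V}
    (h₁ : s(v, w₁) ∈ orientedColorClass o c i) (h₂ : s(v, w₂) ∈ orientedColorClass o c i)
    (ho₁ : o v w₁) (ho₂ : o v w₂) : w₁ = w₂ :=
  hinj v w₁ w₂ ho₁ ho₂ <| (label_eq_of_mem_orientedColorClass hasym h₁ ho₁).trans
    (label_eq_of_mem_orientedColorClass hasym h₂ ho₂).symm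

theorem isAcyclic_fromEdgeSet_orientedColorClass (hwf : WellFounded o)
    (hasym : ∀ u v, o u v → ¬ o v u)
    (hinj : ∀ v w₁ w₂, o v w₁ → o v w₂ → c v w₁ = c v w₂ → w₁ = w₂) (i : ℕ) :
    (SimpleGraph.fromEdgeSet (orientedColorClass o c i)).IsAcyclic := by
  refine SimpleGraph.isAcyclic_of_wellFounded_orientation hwf (fun u v huv => ?_)
    fun v w₁ w₂ h₁ h₂ => eq_of_mem_orientedColorClass hasym hinj h₁.1 h₂.1
  rw [SimpleGraph.fromEdgeSet_adj] at huv
  exact (mem_orientedColorClass.1 huv.1).imp And.left And.left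

end OrientedColorClass

/-- If a finite simple graph `G` admits an acyclic orientation `o` in which
every vertex has out-degree at most `σ`, then the edge set of `G` can be partitioned into `σ`
pairwise disjoint sets `F_0, …, F_{σ-1}`, each a forest and each containing at most one
outgoing edge of every vertex.  In particular, the arboricity of `G` is at most `σ`. -/
theorem acyclic_orientation_arboricity
    {V : Type} [Fintype V] (G : SimpleGraph V) (σ : ℕ)
    (o : V → V → Prop) [DecidableRel o]
    (horient : ∀ u v, G.Adj u v → (o u v ↔ ¬ o v u))
    (hsub : ∀ u v, o u v → G.Adj u v)
    (hacyc : ∀ v, ¬ Relation.TransGen o v v)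
    (houtdeg : ∀ v : V, (Finset.univ.filter (o v)).card ≤ σ) :
    ∃ F : Fin σ → Set (Sym2 V),
      (∀ i, F i ⊆ G.edgeSet) ∧
      (⋃ i, F i) = G.edgeSet ∧
      (∀ i j, i ≠ j → Disjoint (F i) (F j)) ∧
      (∀ i, (SimpleGraph.fromEdgeSet (F i)).IsAcyclic) ∧
      (∀ i, ∀ v w₁ w₂ : V,
        s(v, w₁) ∈ F i → s(v, w₂) ∈ F i → o v w₁ → o v w₂ → w₁ = w₂) := by
  have hasym : ∀ u v, o u v → ¬ o v u := fun u v huv hvu => hacyc u (.tail (.single huv) hvu)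
  have htot : ∀ u v, G.Adj u v → o u v ∨ o v u := fun u v huv =>
    or_iff_not_imp_left.2 fun h => not_not.1 (mt (horient u v huv).2 h)
  obtain ⟨c, hlt, hinj⟩ := exists_outEdge_label o houtdeg
  refine ⟨fun i => orientedColorClass o c i, fun i => orientedColorClass_subset_edgeSet hsub i,
    iUnion_orientedColorClass hsub htot hlt,
    fun i j hij => disjoint_orientedColorClass hasym (Fin.val_injective.ne hij),
    fun i => isAcyclic_fromEdgeSet_orientedColorClass
      (wellFounded_of_forall_not_transGen_self hacyc) hasym hinj i,
    fun i v w₁ w₂ => eq_of_mem_orientedColorClass hasym hinj⟩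
end

section
/- Let M be a maximal matching of a finite simple graph G = (V, E), let B be a set of edges on V disjoint from E, and let G' = (V, E ∪ B). Let S be the set of edges {u, v} ∈ B such that both u and v are unmatched by M, and let M' be any maximal matching of the graph (V, S). Then M ∪ M' is a maximal matching of G'. -/
/-- `M` is a matching of `G`, viewed as a set of edges: `M ⊆ E(G)` and the edges of `M` are
pairwise vertex-disjoint. -/
def EdgeMatching {V : Type} (G : SimpleGraph V) (M : Set (Sym2 V)) : Prop :=
  M ⊆ G.edgeSet ∧ ∀ e ∈ M, ∀ f ∈ M, e ≠ f → ∀ v : V, v ∈ e → v ∉ f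

/-- `v` is matched by the edge set `M`. -/
def MatchedBy {V : Type} (M : Set (Sym2 V)) (v : V) : Prop := ∃ e ∈ M, v ∈ e

/-- `M` is a maximal matching of `G`: a matching such that no edge of `G` can be added,
i.e. every edge of `G` has a matched endpoint. -/
def MaximalEdgeMatching {V : Type} (G : SimpleGraph V) (M : Set (Sym2 V)) : Prop :=
  EdgeMatching G M ∧ ∀ u v : V, G.Adj u v → MatchedBy M u ∨ MatchedBy M v

/-!
The edges of `M'` join vertices left free by `M`, so `M ∪ M'` is still a matching. An edge of
`G'` with an endpoint matched by `M` is covered; otherwise it is a new edge with both endpoints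
free, i.e. an edge of `(V, S)`, and is covered by the maximality of `M'`.
-/

variable {V : Type}

-- The edge set `S` of the statement.
def freeEdges (M B : Set (Sym2 V)) : Set (Sym2 V) :=
  {e ∈ B | ∀ v : V, v ∈ e → ¬ MatchedBy M v}

theorem matchedBy_union_iff {M N : Set (Sym2 V)} {v : V} :
    MatchedBy (M ∪ N) v ↔ MatchedBy M v ∨ MatchedBy N v := by
  simp only [MatchedBy, Set.mem_union, or_and_right, exists_or]

theorem EdgeMatching.mono {G H : SimpleGraph V} {M : Set (Sym2 V)} (hGH : G ≤ H)
    (hM : EdgeMatching G M) : EdgeMatching H M :=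
  ⟨hM.1.trans (SimpleGraph.edgeSet_mono hGH), hM.2⟩

theorem EdgeMatching.union {G : SimpleGraph V} {M N : Set (Sym2 V)} (hM : EdgeMatching G M)
    (hN : EdgeMatching G N) (hfree : ∀ e ∈ N, ∀ v ∈ e, ¬ MatchedBy M v) :
    EdgeMatching G (M ∪ N) := by
  refine ⟨Set.union_subset hM.1 hN.1, ?_⟩
  rintro e (he | he) f (hf | hf) hef v hve hvf
  · exact hM.2 e he f hf hef v hve hvf
  · exact hfree f hf v hvf ⟨e, he, hve⟩
  · exact hfree e he v hve ⟨f, hf, hvf⟩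
  · exact hN.2 e he f hf hef v hve hvf

theorem not_matchedBy_of_subset_edgeSet_freeEdges {M N B : Set (Sym2 V)}
    (hN : N ⊆ (SimpleGraph.fromEdgeSet (freeEdges M B)).edgeSet) :
    ∀ e ∈ N, ∀ v ∈ e, ¬ MatchedBy M v := fun _ he =>
  (SimpleGraph.edgeSet_fromEdgeSet _ ▸ hN he).1.2

theorem matchedBy_union_of_adj_fromEdgeSet_union {G : SimpleGraph V} {M M' B : Set (Sym2 V)}
    (hM : ∀ u v : V, G.Adj u v → MatchedBy M u ∨ MatchedBy M v)
    (hM' : ∀ u v : V, (SimpleGraph.fromEdgeSet (freeEdges M B)).Adj u v →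
      MatchedBy M' u ∨ MatchedBy M' v)
    {u v : V} (huv : (SimpleGraph.fromEdgeSet (G.edgeSet ∪ B)).Adj u v) :
    MatchedBy (M ∪ M') u ∨ MatchedBy (M ∪ M') v := by
  simp only [matchedBy_union_iff]
  obtain ⟨hold | hnew, hne⟩ := SimpleGraph.fromEdgeSet_adj _ |>.mp huv
  · rcases hM u v hold with hu | hv
    · exact .inl (.inl hu)
    · exact .inr (.inl hv)
  · by_cases hu : MatchedBy M u
    · exact .inl (.inl hu)
    by_cases hv : MatchedBy M v
    · exact .inr (.inl hv)
    have hfree : ∀ w ∈ s(u, v), ¬ MatchedBy M w := by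
      rintro w hw
      rcases Sym2.mem_iff.mp hw with rfl | rfl <;> assumption
    rcases hM' u v ((SimpleGraph.fromEdgeSet_adj _).mpr ⟨⟨hnew, hfree⟩, hne⟩) with hu' | hv'
    · exact .inl (.inr hu')
    · exact .inr (.inr hv')

theorem maximal_matching_batch_insert_general
    {V : Type} (G : SimpleGraph V) (M : Set (Sym2 V)) (hM : MaximalEdgeMatching G M)
    (B : Set (Sym2 V))
    (M' : Set (Sym2 V))
    (hM' : MaximalEdgeMatching
      (SimpleGraph.fromEdgeSet {e ∈ B | ∀ v : V, v ∈ e → ¬ MatchedBy M v}) M') :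
    MaximalEdgeMatching (SimpleGraph.fromEdgeSet (G.edgeSet ∪ B)) (M ∪ M') := by
  have hG : G ≤ SimpleGraph.fromEdgeSet (G.edgeSet ∪ B) :=
    (SimpleGraph.fromEdgeSet_edgeSet G).ge.trans
      (SimpleGraph.fromEdgeSet_mono Set.subset_union_left)
  have hS : SimpleGraph.fromEdgeSet (freeEdges M B) ≤ SimpleGraph.fromEdgeSet (G.edgeSet ∪ B) :=
    SimpleGraph.fromEdgeSet_mono fun e he => Or.inr he.1
  exact ⟨(hM.1.mono hG).union (hM'.1.mono hS) (not_matchedBy_of_subset_edgeSet_freeEdges hM'.1.1),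
    fun _ _ => matchedBy_union_of_adj_fromEdgeSet_union hM.2 hM'.2⟩

/-- Let `M` be a maximal matching of `G = (V, E)`, let `B` be a set of
(non-loop) edges on `V` disjoint from `E`, and let `G' = (V, E ∪ B)`.  Let `S` be the set of
edges of `B` both of whose endpoints are unmatched by `M`, and let `M'` be any maximal matching
of `(V, S)`.  Then `M ∪ M'` is a maximal matching of `G'`. -/
theorem maximal_matching_batch_insert
    {V : Type} (G : SimpleGraph V) (M : Set (Sym2 V)) (hM : MaximalEdgeMatching G M)
    (B : Set (Sym2 V)) (hBloop : ∀ e ∈ B, ¬ e.IsDiag) (hBnew : Disjoint B G.edgeSet)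
    (M' : Set (Sym2 V))
    (hM' : MaximalEdgeMatching
      (SimpleGraph.fromEdgeSet {e ∈ B | ∀ v : V, v ∈ e → ¬ MatchedBy M v}) M') :
    MaximalEdgeMatching (SimpleGraph.fromEdgeSet (G.edgeSet ∪ B)) (M ∪ M') :=
  maximal_matching_batch_insert_general G M hM B M' hM'
end

section
/- Let M be a maximal matching of a finite simple graph G = (V, E), let D ⊆ E be a set of edges, and let G' = (V, E \ D). Let M'' be any matching of G' with M \ D ⊆ M'' such that every vertex that is an endpoint of an edge of M ∩ D and is unmatched by M'' has no M''-unmatched neighbor in G'. Then M'' is a maximal matching of G'. -/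
/-- Let `M` be a maximal matching of `G = (V, E)`, `D ⊆ E`, and
`G' = (V, E \ D)`.  Let `M''` be any matching of `G'` with `M \ D ⊆ M''` such that every
vertex that is an endpoint of an edge of `M ∩ D` and is unmatched by `M''` has no
`M''`-unmatched neighbor in `G'`.  Then `M''` is a maximal matching of `G'`. -/
theorem maximal_matching_batch_delete
    {V : Type} (G : SimpleGraph V) (M : Set (Sym2 V)) (hM : MaximalEdgeMatching G M)
    (D : Set (Sym2 V)) (hD : D ⊆ G.edgeSet)
    (M'' : Set (Sym2 V))
    (hmatch : EdgeMatching (G.deleteEdges D) M'')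
    (hsub : M \ D ⊆ M'')
    (hrepair : ∀ v : V, (∃ e ∈ M ∩ D, v ∈ e) → ¬ MatchedBy M'' v →
      ∀ w : V, (G.deleteEdges D).Adj v w → MatchedBy M'' w) :
    MaximalEdgeMatching (G.deleteEdges D) M'' := by
  refine ⟨hmatch, fun u v huv => ?_⟩
  have hGadj : G.Adj u v := ((SimpleGraph.deleteEdges_adj ..).mp huv).1
  have key : ∀ x y : V, (G.deleteEdges D).Adj x y → MatchedBy M x →
      MatchedBy M'' x ∨ MatchedBy M'' y := by
    intro x y hxy ⟨e, heM, hxe⟩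
    by_cases heD : e ∈ D
    · by_cases hx : MatchedBy M'' x
      · exact Or.inl hx
      · exact Or.inr (hrepair x ⟨e, ⟨heM, heD⟩, hxe⟩ hx y hxy)
    · exact Or.inl ⟨e, hsub ⟨heM, heD⟩, hxe⟩
  rcases hM.2 u v hGadj with h | h
  · exact key u v huv h
  · exact (key v u huv.symm h).symm
end

section
/- Let G be a finite simple graph, let a, b > 0 be real numbers, and let X ⊆ V(G) be a nonempty set of vertices each of degree at least a in G. Consider any sequence of vertex deletions v_1, …, v_p, where each v_j is deleted (together with its incident edges) from the graph remaining after deleting v_1, …, v_{j−1}, and where each v_j has degree strictly less than b in that remaining graph at the time of its deletion. If every vertex of X appears among v_1, …, v_p, then p ≥ a·|X| / (2b). -/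
/-- Let `a, b > 0` and let `X` be a nonempty set of vertices of `G`, each of
degree at least `a`.  Consider a sequence of vertex deletions `v_1, …, v_p` (each `v_j` deleted,
with its incident edges, from the graph remaining after deleting `v_1, …, v_{j-1}`) where each
`v_j` has degree strictly less than `b` in the remaining graph at the time of its deletion.
If every vertex of `X` appears among the `v_j`, then `p ≥ a·|X|/(2b)`. -/
theorem deletion_sequence_length_lower_bound
    {V : Type} [Fintype V] [DecidableEq V] (G : SimpleGraph V) [DecidableRel G.Adj]
    (a b : ℝ) (ha : 0 < a) (hb : 0 < b)
    (X : Finset V) (hXne : X.Nonempty) (hXdeg : ∀ x ∈ X, a ≤ (G.degree x : ℝ))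
    (p : ℕ) (v : Fin p → V) (hinj : Function.Injective v)
    (hdeg : ∀ j : Fin p,
      ((Finset.univ.filter
          (fun w => G.Adj (v j) w ∧ ∀ i : Fin p, i < j → w ≠ v i)).card : ℝ) < b)
    (hX : ∀ x ∈ X, ∃ j : Fin p, v j = x) :
    a * X.card / (2 * b) ≤ (p : ℝ) := by
  classical
  set E : Fin p → Finset V := fun j =>
    Finset.univ.filter (fun w => G.Adj (v j) w ∧ ∀ i : Fin p, i < j → w ≠ v i) with hE
  set S : Finset ((_ : V) × V) := X.sigma (fun x => G.neighborFinset x) with hS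
  set T : Finset ((_ : Fin p) × V) := (Finset.univ : Finset (Fin p)).sigma E with hT
  -- the 2-to-1 map
  let f : ((_ : V) × V) → ((_ : Fin p) × V) := fun q =>
    if hx : ∃ j, v j = q.1 then
      if hw : ∃ i, v i = q.2 ∧ i < hx.choose then ⟨hw.choose, q.1⟩ else ⟨hx.choose, q.2⟩
    else ⟨(hX hXne.choose hXne.choose_spec).choose, q.2⟩
  have key : S.card ≤ 2 * T.card := by
    apply Finset.card_le_mul_card_image_of_maps_to (f := f)
    · rintro ⟨x, w⟩ hq
      rw [hS, Finset.mem_sigma] at hq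
      obtain ⟨hxX, hwadj⟩ := hq
      rw [SimpleGraph.mem_neighborFinset] at hwadj
      have hx : ∃ j, v j = x := hX x hxX
      simp only [f, dif_pos hx]
      have hvx := hx.choose_spec
      split_ifs with hw
      · obtain ⟨hvw, hlt⟩ := hw.choose_spec
        rw [hT, Finset.mem_sigma]
        refine ⟨Finset.mem_univ _, ?_⟩
        rw [hE]
        simp only [Finset.mem_filter, Finset.mem_univ, true_and]
        constructor
        · rw [hvw]; exact hwadj.symm
        · intro i hi hxi
          have : i = hx.choose := (hinj (hvx.trans hxi)).symm
          omega
      · rw [hT, Finset.mem_sigma]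
        refine ⟨Finset.mem_univ _, ?_⟩
        rw [hE]
        simp only [Finset.mem_filter, Finset.mem_univ, true_and]
        constructor
        · rw [hvx]; exact hwadj
        · intro i hi hwi
          exact hw ⟨i, hwi.symm, hi⟩
    · rintro ⟨j, u⟩ hjt
      have hsub : (S.filter (fun q => f q = ⟨j, u⟩)) ⊆ {⟨v j, u⟩, ⟨u, v j⟩} := by
        rintro ⟨x, w⟩ hq
        rw [Finset.mem_filter] at hq
        obtain ⟨hqS, hqf⟩ := hq
        rw [hS, Finset.mem_sigma] at hqS
        have hx : ∃ k, v k = x := hX x hqS.1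
        simp only [f, dif_pos hx] at hqf
        have hvx := hx.choose_spec
        split_ifs at hqf with hw
        · obtain ⟨hvw, _⟩ := hw.choose_spec
          have h1 : hw.choose = j := congrArg Sigma.fst hqf
          have h2 : x = u := by
            have := congrArg Sigma.snd hqf
            simpa using this
          have h3 : w = v j := by rw [← hvw, h1]
          simp [h2, h3]
        · have h1 : hx.choose = j := congrArg Sigma.fst hqf
          have h2 : w = u := by
            have := congrArg Sigma.snd hqf
            simpa using this
          have h3 : x = v j := by rw [← hvx, h1]
          simp [h2, h3]
      calc (S.filter (fun q => f q = ⟨j, u⟩)).card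
          ≤ ({⟨v j, u⟩, ⟨u, v j⟩} : Finset ((_ : V) × V)).card := Finset.card_le_card hsub
        _ ≤ 2 := by
            apply le_trans (Finset.card_insert_le _ _)
            simp
  have hScard : (S.card : ℝ) = ∑ x ∈ X, (G.degree x : ℝ) := by
    rw [hS, Finset.card_sigma]
    push_cast
    exact Finset.sum_congr rfl fun x _ => by rw [SimpleGraph.card_neighborFinset_eq_degree]
  have hTcard : (T.card : ℝ) ≤ p * b := by
    rw [hT, Finset.card_sigma]
    push_cast
    calc ∑ j : Fin p, ((E j).card : ℝ) ≤ ∑ _j : Fin p, b :=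
          Finset.sum_le_sum fun j _ => (hdeg j).le
      _ = p * b := by simp [mul_comm]
  have hlow : a * X.card ≤ (S.card : ℝ) := by
    rw [hScard]
    calc a * X.card = ∑ _x ∈ X, a := by rw [Finset.sum_const, nsmul_eq_mul, mul_comm]
      _ ≤ ∑ x ∈ X, (G.degree x : ℝ) := Finset.sum_le_sum hXdeg
  have hchain : a * X.card ≤ 2 * b * p := by
    calc a * X.card ≤ (S.card : ℝ) := hlow
      _ ≤ 2 * T.card := by exact_mod_cast key
      _ ≤ 2 * (p * b) := by linarith [hTcard]
      _ = 2 * b * p := by ring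
  rw [div_le_iff₀ (by positivity)]
  linarith
end
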